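/- arXiv:1802.02069 — 11 statements merged into one kernel-verified Lean document; each statement's English description precedes it below -/
import Mathlib

section
/- Let (X,d) be a separable metric space and let λ be a locally finite Borel regular measure over X of Vitali type with respect to d. Let α and β be locally finite Borel regular measures over X, let 0 < c < ∞, and let A ⊂ X be a set such that the lower derivative satisfies D̲(α,β,x) < c for every x ∈ A. Then α_λ(A) ≤ c·β_λ(A). -/
open MeasureTheory Metric Filter Set
open scoped ENNReal Topology NNReal

/-- `μ_λ(A) := inf { μ(C) : C Borel, λ(A \ C) = 0 }`. -/
noncomputable def relPart {X : Type*} [MeasurableSpace X]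
    (μ lam : Measure X) (A : Set X) : ℝ≥0∞ :=
  ⨅ (C : Set X) (_ : MeasurableSet C) (_ : lam (A \ C) = 0), μ C

/-- A measure `lam` is of Vitali type with respect to the distance: for every set `A`
and every family `ℬ` of (closed) balls, recorded as pairs (center, radius), such that every
point of `A` is the center of balls of `ℬ` of arbitrarily small radius, there is a countable
disjointed subfamily covering `lam`-almost all of `A`. -/
def IsVitaliType {X : Type*} [MetricSpace X] [MeasurableSpace X] (lam : Measure X) : Prop :=
  ∀ (A : Set X) (ℬ : Set (X × ℝ)),
    (∀ p ∈ ℬ, 0 < p.2) →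
    (∀ x ∈ A, ∀ ε > 0, ∃ r : ℝ, 0 < r ∧ r < ε ∧ (x, r) ∈ ℬ) →
    ∃ F ⊆ ℬ, F.Countable ∧
      (F.PairwiseDisjoint fun p => closedBall p.1 p.2) ∧
      lam (A \ ⋃ p ∈ F, closedBall p.1 p.2) = 0

/-- Lower derivative `D̲(μ,λ,x) = liminf_{r→0⁺} μ(B(x,r))/λ(B(x,r))`
(in `ℝ≥0∞`, with the convention `0/0 = 0`). -/
noncomputable def lowerDeriv {X : Type*} [MetricSpace X] [MeasurableSpace X]
    (μ lam : Measure X) (x : X) : ℝ≥0∞ :=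
  Filter.liminf (fun r : ℝ => μ (closedBall x r) / lam (closedBall x r)) (𝓝[>] (0:ℝ))

/-
Cover almost every point of `A` by small closed balls `B` inside an open set `U` on which
`α B ≤ c β B`; the Vitali property extracts a countable disjoint subfamily covering `λ`-almost
all of `A`, so its union `D` is admissible for `α_λ(A)` and `α D ≤ c β D ≤ c β U`. Outer
regularity of `β` lets `U` shrink to any set `C` admissible for `β_λ(A)`.
-/

lemma ENNReal.le_mul_of_div_lt {a b c : ℝ≥0∞} (h : a / b < c) : a ≤ c * b := by
  rcases eq_or_ne c ∞ with rfl | hc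
  · rcases eq_or_ne b 0 with rfl | hb
    · simp_all [lt_top_iff_ne_top, ENNReal.div_eq_top]
    · simp [ENNReal.top_mul hb]
  · exact (ENNReal.div_le_iff_le_mul (Or.inr hc) (Or.inr (pos_of_gt h).ne')).1 h.le

lemma ENNReal.le_mul_of_forall_lt_le_mul {a b c : ℝ≥0∞} (hc0 : c ≠ 0) (hc : c ≠ ∞)
    (h : ∀ b', b < b' → a ≤ c * b') : a ≤ c * b := by
  rw [← ENNReal.div_le_iff' hc0 hc]
  exact le_of_forall_gt_imp_ge_of_dense fun b' hb' => (ENNReal.div_le_iff' hc0 hc).2 (h b' hb')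

section relPart

variable {X : Type*} [MeasurableSpace X] {μ lam : Measure X} {A : Set X}

lemma relPart_le {C : Set X} (hC : MeasurableSet C) (hAC : lam (A \ C) = 0) :
    relPart μ lam A ≤ μ C :=
  iInf₂_le_of_le C hC (iInf_le _ hAC)

lemma exists_measure_lt_of_relPart_lt {b : ℝ≥0∞} (h : relPart μ lam A < b) :
    ∃ C, lam (A \ C) = 0 ∧ μ C < b := by
  simp only [relPart, iInf_lt_iff] at h
  obtain ⟨C, -, hAC, hC⟩ := h
  exact ⟨C, hAC, hC⟩

end relPart

lemma measure_biUnion_le_mul_of_pairwiseDisjoint {X ι : Type*} [MeasurableSpace X]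
    {α β : Measure X} {c : ℝ≥0∞} {F : Set ι} {s : ι → Set X} (hF : F.Countable)
    (hd : F.PairwiseDisjoint s) (hs : ∀ i ∈ F, MeasurableSet (s i))
    (h : ∀ i ∈ F, α (s i) ≤ c * β (s i)) :
    α (⋃ i ∈ F, s i) ≤ c * β (⋃ i ∈ F, s i) :=
  calc α (⋃ i ∈ F, s i) ≤ ∑' i : F, α (s i) := measure_biUnion_le α hF s
    _ ≤ ∑' i : F, c * β (s i) := ENNReal.tsum_le_tsum fun i => h i i.2
    _ = c * β (⋃ i ∈ F, s i) := by rw [ENNReal.tsum_mul_left, measure_biUnion hF hd hs]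

section Vitali

variable {X : Type*} [MetricSpace X] [MeasurableSpace X] {α β : Measure X} {c : ℝ≥0∞}

lemma exists_closedBall_subset_measure_le_mul {x : X} (hx : lowerDeriv α β x < c)
    {U : Set X} (hU : U ∈ 𝓝 x) {ε : ℝ} (hε : 0 < ε) :
    ∃ r, 0 < r ∧ r < ε ∧ closedBall x r ⊆ U ∧
      α (closedBall x r) ≤ c * β (closedBall x r) := by
  have hsmall : ∀ᶠ r in 𝓝[>] (0 : ℝ), r ∈ Ioo 0 ε ∧ closedBall x r ⊆ U :=
    Filter.Eventually.and (Ioo_mem_nhdsGT hε)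
      (nhdsWithin_le_nhds (eventually_closedBall_subset hU))
  obtain ⟨r, hr, ⟨hr0, hrε⟩, hrU⟩ :=
    ((frequently_lt_of_liminf_lt (h := hx)).and_eventually hsmall).exists
  exact ⟨r, hr0, hrε, hrU, ENNReal.le_mul_of_div_lt hr⟩

variable [OpensMeasurableSpace X] {lam : Measure X}

lemma relPart_le_mul_of_isOpen (hVit : IsVitaliType lam) {A U : Set X}
    (hA : ∀ x ∈ A, lowerDeriv α β x < c) (hU : IsOpen U) (hAU : lam (A \ U) = 0) :
    relPart α lam A ≤ c * β U := by
  let ℬ : Set (X × ℝ) := {p | 0 < p.2 ∧ closedBall p.1 p.2 ⊆ U ∧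
    α (closedBall p.1 p.2) ≤ c * β (closedBall p.1 p.2)}
  have hℬ : ∀ x ∈ A ∩ U, ∀ ε > 0, ∃ r : ℝ, 0 < r ∧ r < ε ∧ (x, r) ∈ ℬ :=
    fun x hx ε hε =>
      let ⟨r, hr0, hrε, hrU, hαβ⟩ :=
        exists_closedBall_subset_measure_le_mul (hA x hx.1) (hU.mem_nhds hx.2) hε
      ⟨r, hr0, hrε, hr0, hrU, hαβ⟩
  obtain ⟨F, hFℬ, hF, hFd, hFnull⟩ := hVit (A ∩ U) ℬ (fun p hp => hp.1) hℬ
  have hball : ∀ p ∈ F, MeasurableSet (closedBall p.1 p.2) :=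
    fun _ _ => measurableSet_closedBall
  have hAD : lam (A \ ⋃ p ∈ F, closedBall p.1 p.2) = 0 := by
    refine measure_mono_null (fun x hx => ?_) (measure_union_null hFnull hAU)
    by_cases hxU : x ∈ U
    exacts [Or.inl ⟨⟨hx.1, hxU⟩, hx.2⟩, Or.inr ⟨hx.1, hxU⟩]
  calc relPart α lam A ≤ α (⋃ p ∈ F, closedBall p.1 p.2) :=
        relPart_le (MeasurableSet.biUnion hF hball) hAD
    _ ≤ c * β (⋃ p ∈ F, closedBall p.1 p.2) :=
        measure_biUnion_le_mul_of_pairwiseDisjoint hF hFd hball fun p hp => (hFℬ hp).2.2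
    _ ≤ c * β U := by
        gcongr
        exact iUnion₂_subset fun p hp => (hFℬ hp).2.1

end Vitali

theorem stmt1_general {X : Type*} [MetricSpace X] [TopologicalSpace.SeparableSpace X]
    [MeasurableSpace X] [BorelSpace X]
    (lam α β : Measure X)
    [IsLocallyFiniteMeasure β]
    (hVit : IsVitaliType lam)
    (c : ℝ≥0∞) (hc0 : 0 < c) (hc : c < ∞)
    (A : Set X) (hA : ∀ x ∈ A, lowerDeriv α β x < c) :
    relPart α lam A ≤ c * relPart β lam A := by
  refine ENNReal.le_mul_of_forall_lt_le_mul hc0.ne' hc.ne fun b hb => ?_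
  obtain ⟨C, hAC, hCb⟩ := exists_measure_lt_of_relPart_lt hb
  obtain ⟨U, hCU, hU, hUb⟩ := Set.exists_isOpen_lt_of_lt C b hCb
  have hAU : lam (A \ U) = 0 := measure_mono_null (sdiff_subset_sdiff_right hCU) hAC
  calc relPart α lam A ≤ c * β U := relPart_le_mul_of_isOpen hVit hA hU hAU
    _ ≤ c * b := by gcongr

theorem stmt1 {X : Type*} [MetricSpace X] [TopologicalSpace.SeparableSpace X]
    [MeasurableSpace X] [BorelSpace X]
    (lam α β : Measure X) [IsLocallyFiniteMeasure lam] [IsLocallyFiniteMeasure α]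
    [IsLocallyFiniteMeasure β]
    (hVit : IsVitaliType lam)
    (c : ℝ≥0∞) (hc0 : 0 < c) (hc : c < ∞)
    (A : Set X) (hA : ∀ x ∈ A, lowerDeriv α β x < c) :
    relPart α lam A ≤ c * relPart β lam A :=
  stmt1_general lam α β hVit c hc0 hc A hA
end

section
/- Let (X,d) be a separable metric space and let λ be a locally finite Borel regular measure over X of Vitali type with respect to d. Then for every locally finite Borel regular measure μ over X, for λ-almost every x ∈ X the limit D(μ,λ,x) = lim_{r→0} μ(B(x,r))/λ(B(x,r)) exists and satisfies 0 ≤ D(μ,λ,x) < ∞. -/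
open MeasureTheory Metric Filter Set
open scoped ENNReal Topology NNReal

/-- The Vitali family of closed balls associated to a Vitali-type measure. -/
noncomputable def vitaliFamilyOfVitaliType {X : Type*} [MetricSpace X]
    [MeasurableSpace X] [BorelSpace X]
    (lam : Measure X) (hVit : IsVitaliType lam) : VitaliFamily lam where
  setsAt x := (fun r : ℝ => closedBall x r) '' Ioi (0 : ℝ)
  measurableSet x s hs := by
    obtain ⟨r, -, rfl⟩ := hs; exact measurableSet_closedBall
  nonempty_interior x s hs := by
    obtain ⟨r, hr, rfl⟩ := hs
    exact ⟨x, ball_subset_interior_closedBall (mem_ball_self hr)⟩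
  nontrivial x ε hε := ⟨closedBall x ε, ⟨ε, hε, rfl⟩, Subset.rfl⟩
  covering s f hf hfine := by
    set ℬ : Set (X × ℝ) := {p | p.1 ∈ s ∧ 0 < p.2 ∧ closedBall p.1 p.2 ∈ f p.1} with hℬ
    have hpos : ∀ p ∈ ℬ, 0 < p.2 := fun p hp => hp.2.1
    have hfine' : ∀ x ∈ s, ∀ ε > (0:ℝ), ∃ r, 0 < r ∧ r < ε ∧ (x, r) ∈ ℬ := by
      intro x hx ε hε
      obtain ⟨t, htf, ht⟩ := hfine x hx (ε / 2) (by linarith)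
      obtain ⟨r', hr', rfl⟩ := hf x hx htf
      rcases lt_or_ge r' ε with h | h
      · exact ⟨r', hr', h, hx, hr', htf⟩
      · refine ⟨ε / 2, by linarith, by linarith, hx, by linarith, ?_⟩
        have heq : closedBall x (ε / 2) = closedBall x r' :=
          Subset.antisymm (closedBall_subset_closedBall (by linarith)) ht
        rw [heq]; exact htf
    obtain ⟨F, hFB, hFc, hFd, hFcov⟩ := hVit s ℬ hpos hfine'
    refine ⟨(fun p : X × ℝ => (p.1, closedBall p.1 p.2)) '' F, ?_, ?_, ?_, ?_⟩
    · rintro p ⟨q, hq, rfl⟩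
      exact (hFB hq).1
    · rintro p ⟨q, hq, rfl⟩ p' ⟨q', hq', rfl⟩ hne
      have hqq' : q ≠ q' := by rintro rfl; exact hne rfl
      exact hFd hq hq' hqq'
    · rintro p ⟨q, hq, rfl⟩
      exact (hFB hq).2.2
    · have : (⋃ p ∈ (fun p : X × ℝ => (p.1, closedBall p.1 p.2)) '' F,
          (p : X × Set X).2) = ⋃ p ∈ F, closedBall p.1 p.2 := biUnion_image
      rw [this]; exact hFcov

theorem vitaliFamilyOfVitaliType_tendsto_filterAt {X : Type*} [MetricSpace X]
    [MeasurableSpace X] [BorelSpace X]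
    (lam : Measure X) (hVit : IsVitaliType lam) (x : X) :
    Tendsto (fun r => closedBall x r) (𝓝[>] (0:ℝ))
      ((vitaliFamilyOfVitaliType lam hVit).filterAt x) := by
  intro s hs
  simp only [mem_map]
  obtain ⟨ε, εpos, hε⟩ :
      ∃ ε : ℝ, ε > 0 ∧
        ∀ a : Set X, a ∈ (vitaliFamilyOfVitaliType lam hVit).setsAt x →
          a ⊆ closedBall x ε → a ∈ s :=
    (VitaliFamily.mem_filterAt_iff _).1 hs
  have h : Ioc (0 : ℝ) ε ∈ 𝓝[>] (0 : ℝ) := Ioc_mem_nhdsGT_of_mem ⟨le_rfl, εpos⟩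
  filter_upwards [h] with r hr
  apply hε
  · exact mem_image_of_mem _ hr.1
  · exact closedBall_subset_closedBall hr.2

theorem stmt3 {X : Type*} [MetricSpace X] [TopologicalSpace.SeparableSpace X]
    [MeasurableSpace X] [BorelSpace X]
    (lam : Measure X) [IsLocallyFiniteMeasure lam] (hVit : IsVitaliType lam)
    (μ : Measure X) [IsLocallyFiniteMeasure μ] :
    ∀ᵐ x ∂lam, ∃ L : ℝ≥0∞, L < ∞ ∧
      Filter.Tendsto (fun r : ℝ => μ (closedBall x r) / lam (closedBall x r))
        (𝓝[>] (0:ℝ)) (𝓝 L) := by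
  haveI : SecondCountableTopology X :=
    UniformSpace.secondCountable_of_separable X
  set v := vitaliFamilyOfVitaliType lam hVit
  filter_upwards [v.ae_tendsto_rnDeriv μ, Measure.rnDeriv_lt_top μ lam] with x hx h'x
  exact ⟨μ.rnDeriv lam x, h'x,
    hx.comp (vitaliFamilyOfVitaliType_tendsto_filterAt lam hVit x)⟩
end

section
/- Let (X,d) be a separable metric space and let λ be a locally finite Borel regular measure over X of Vitali type with respect to d. Then for every locally finite Borel regular measure μ over X and every λ-measurable set A ⊂ X, μ_λ(A) = ∫_A D(μ,λ,x) dλ(x), where D(μ,λ,x) := lim_{r→0} μ(B(x,r))/λ(B(x,r)) (which exists and is finite for λ-almost every x). -/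
open MeasureTheory Metric Filter Set
open scoped ENNReal Topology NNReal

/-- Upper derivative `D̄(μ,λ,x) = limsup_{r→0⁺} μ(B(x,r))/λ(B(x,r))`
(in `ℝ≥0∞`, with the convention `0/0 = 0`). It coincides `λ`-a.e. with the
derivative `D(μ,λ,x)`, which exists `λ`-a.e. (first part of the conclusion below). -/
noncomputable def upperDeriv {X : Type*} [MetricSpace X] [MeasurableSpace X]
    (μ lam : Measure X) (x : X) : ℝ≥0∞ :=
  Filter.limsup (fun r : ℝ => μ (closedBall x r) / lam (closedBall x r)) (𝓝[>] (0:ℝ))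

/-!
Closed balls centred at each point form a Vitali family for `λ` precisely because `λ` is of
Vitali type, so the differentiation theory of Vitali families shows that
`μ(B(x,r))/λ(B(x,r))` tends `λ`-a.e. to the Radon–Nikodym derivative `dμ/dλ`, which is finite
`λ`-a.e. On the other hand `μ_λ(A)` is the mass that the absolutely continuous part
`λ.withDensity (dμ/dλ)` gives to `A`: every Borel `C` containing `A` up to a `λ`-null set has
`μ C ≥ (λ.withDensity (dμ/dλ)) A`, and intersecting a measurable hull of `A` with a `λ`-conull
set on which the singular part of `μ` vanishes attains this bound.
-/

section RelPart

variable {X : Type*} [MeasurableSpace X] {μ lam : Measure X} {A : Set X}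

theorem withDensity_rnDeriv_le_relPart :
    lam.withDensity (μ.rnDeriv lam) A ≤ relPart μ lam A := by
  refine le_iInf fun C => le_iInf fun _ => le_iInf fun hAC => ?_
  calc lam.withDensity (μ.rnDeriv lam) A
      ≤ lam.withDensity (μ.rnDeriv lam) C :=
        measure_mono_ae (withDensity_absolutelyContinuous _ _ (ae_le_set.mpr hAC))
    _ ≤ μ C := Measure.withDensity_rnDeriv_le μ lam C

theorem relPart_le_withDensity_rnDeriv [μ.HaveLebesgueDecomposition lam]
    (hA : NullMeasurableSet A lam) :
    relPart μ lam A ≤ lam.withDensity (μ.rnDeriv lam) A := by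
  obtain ⟨A', hAA', hA'm, hA'A⟩ := hA.exists_measurable_superset_ae_eq
  have hS := μ.mutuallySingular_singularPart lam
  set C := A' ∩ hS.nullSet
  have hC : MeasurableSet C := hA'm.inter hS.measurableSet_nullSet
  have hAC : lam (A \ C) = 0 :=
    measure_mono_null (fun x hx hxS => hx.2 ⟨hAA' hx.1, hxS⟩)
      hS.measure_compl_nullSet
  have hμC : μ C = lam.withDensity (μ.rnDeriv lam) C := by
    have hsing : μ.singularPart lam C = 0 :=
      measure_mono_null inter_subset_right hS.measure_nullSet
    conv_lhs => rw [μ.haveLebesgueDecomposition_add lam]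
    rw [Measure.add_apply, hsing, zero_add]
  calc relPart μ lam A ≤ μ C := iInf₂_le_of_le C hC (iInf_le _ hAC)
    _ = lam.withDensity (μ.rnDeriv lam) C := hμC
    _ ≤ lam.withDensity (μ.rnDeriv lam) A' := measure_mono inter_subset_left
    _ = lam.withDensity (μ.rnDeriv lam) A :=
      measure_congr ((withDensity_absolutelyContinuous _ _).ae_eq hA'A)

theorem relPart_eq_withDensity_rnDeriv [μ.HaveLebesgueDecomposition lam]
    (hA : NullMeasurableSet A lam) :
    relPart μ lam A = lam.withDensity (μ.rnDeriv lam) A :=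
  (relPart_le_withDensity_rnDeriv hA).antisymm withDensity_rnDeriv_le_relPart

end RelPart

theorem Metric.closedBall_min_eq_of_subset {X : Type*} [PseudoMetricSpace X] {x : X} {r δ : ℝ}
    (h : closedBall x r ⊆ closedBall x δ) : closedBall x (min r δ) = closedBall x r :=
  (closedBall_subset_closedBall (min_le_left _ _)).antisymm fun _ hy =>
    mem_closedBall.mpr (le_min hy (h hy))

namespace IsVitaliType

variable {X : Type*} [MetricSpace X] [MeasurableSpace X] [BorelSpace X] {lam : Measure X}

noncomputable def vitaliFamily (hVit : IsVitaliType lam) : VitaliFamily lam where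
  setsAt x := closedBall x '' Ioi 0
  measurableSet := by
    rintro x _ ⟨r, -, rfl⟩
    exact measurableSet_closedBall
  nonempty_interior := by
    rintro x _ ⟨r, hr, rfl⟩
    exact ⟨x, ball_subset_interior_closedBall (mem_ball_self hr)⟩
  nontrivial x ε hε := ⟨closedBall x ε, mem_image_of_mem _ hε, Subset.rfl⟩
  covering := by
    intro s f hf hfine
    let ℬ : Set (X × ℝ) := {p | p.1 ∈ s ∧ 0 < p.2 ∧ closedBall p.1 p.2 ∈ f p.1}
    have hℬ_fine : ∀ x ∈ s, ∀ ε > 0, ∃ r : ℝ, 0 < r ∧ r < ε ∧ (x, r) ∈ ℬ := by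
      intro x hx ε hε
      obtain ⟨_, hft, hts⟩ := hfine x hx (ε / 2) (half_pos hε)
      obtain ⟨r, hr, rfl⟩ := hf x hx hft
      have hpos : 0 < min r (ε / 2) := lt_min hr (half_pos hε)
      refine ⟨min r (ε / 2), hpos, (min_le_right _ _).trans_lt (half_lt_self hε), hx, hpos, ?_⟩
      rwa [closedBall_min_eq_of_subset hts]
    obtain ⟨F, hFℬ, -, hFdisj, hFnull⟩ := hVit s ℬ (fun p hp => hp.2.1) hℬ_fine
    refine ⟨(fun p => (p.1, closedBall p.1 p.2)) '' F, ?_, ?_, ?_, ?_⟩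
    · rintro _ ⟨p, hp, rfl⟩
      exact (hFℬ hp).1
    · rintro _ ⟨p, hp, rfl⟩ _ ⟨q, hq, rfl⟩ hne
      exact hFdisj hp hq fun hpq => hne (hpq ▸ rfl)
    · rintro _ ⟨p, hp, rfl⟩
      exact (hFℬ hp).2.2
    · rwa [biUnion_image]

theorem tendsto_filterAt (hVit : IsVitaliType lam) (x : X) :
    Tendsto (closedBall x) (𝓝[>] 0) (hVit.vitaliFamily.filterAt x) := by
  refine (VitaliFamily.tendsto_filterAt_iff _).mpr ⟨?_, fun ε hε => ?_⟩
  · filter_upwards [self_mem_nhdsWithin] with r hr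
    exact mem_image_of_mem _ hr
  · filter_upwards [Ioc_mem_nhdsGT hε] with r hr
    exact closedBall_subset_closedBall hr.2

theorem ae_tendsto_rnDeriv [SecondCountableTopology X] [IsLocallyFiniteMeasure lam]
    (hVit : IsVitaliType lam) (μ : Measure X) [IsLocallyFiniteMeasure μ] :
    ∀ᵐ x ∂lam, Tendsto (fun r => μ (closedBall x r) / lam (closedBall x r)) (𝓝[>] 0)
      (𝓝 (μ.rnDeriv lam x)) := by
  filter_upwards [hVit.vitaliFamily.ae_tendsto_rnDeriv μ] with x hx
  exact hx.comp (hVit.tendsto_filterAt x)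

end IsVitaliType

theorem stmt4 {X : Type*} [MetricSpace X] [TopologicalSpace.SeparableSpace X]
    [MeasurableSpace X] [BorelSpace X]
    (lam : Measure X) [IsLocallyFiniteMeasure lam] (hVit : IsVitaliType lam)
    (μ : Measure X) [IsLocallyFiniteMeasure μ] :
    (∀ᵐ x ∂lam, upperDeriv μ lam x < ∞ ∧
      Filter.Tendsto (fun r : ℝ => μ (closedBall x r) / lam (closedBall x r))
        (𝓝[>] (0:ℝ)) (𝓝 (upperDeriv μ lam x))) ∧
    ∀ A : Set X, NullMeasurableSet A lam →
      relPart μ lam A = ∫⁻ x in A, upperDeriv μ lam x ∂lam := by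
  have := UniformSpace.secondCountable_of_separable X
  have hlim := hVit.ae_tendsto_rnDeriv μ
  have hupper : upperDeriv μ lam =ᵐ[lam] μ.rnDeriv lam := hlim.mono fun x hx => hx.limsup_eq
  refine ⟨?_, fun A hA => ?_⟩
  · filter_upwards [hlim, hupper, μ.rnDeriv_lt_top lam] with x hx hxu hfin
    rw [hxu]
    exact ⟨hfin, hx⟩
  · rw [relPart_eq_withDensity_rnDeriv hA, withDensity_apply',
      lintegral_congr_ae (ae_restrict_of_ae hupper)]
end

section
/- Let ℝⁿ be equipped with the Euclidean distance. There exists an integer K ≥ 1 (depending only on n) with the following property: if x₁,…,x_k are points of ℝⁿ and r₁,…,r_k are positive numbers such that x_i ∉ B(x_j,r_j) for all j ≠ i and ⋂_{i=1}^k B(x_i,r_i) ≠ ∅, then k ≤ K. -/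
/-!
Let `z` be a common point of the balls. For `i ≠ j`, both `‖x i - z‖ ≤ r i` and `‖x j - z‖ ≤ r j`
are less than `‖x i - x j‖`, so in the triangle `z, x i, x j` the angle at `z` is at least `π / 3`
and the unit vectors pointing from `z` to the centers are `1`-separated. A volume argument
(`Besicovitch.card_le_of_separated`) bounds the number of such vectors by `5 ^ n`. No center can
equal `z` unless there is only one ball.
-/

open Metric Set

open RealInnerProductSpace in
lemma one_le_norm_sub_normalize_of_norm_le_norm_sub {E : Type*} [NormedAddCommGroup E]
    [InnerProductSpace ℝ E] {u v : E} (hu : u ≠ 0) (hv : v ≠ 0)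
    (hu_le : ‖u‖ ≤ ‖u - v‖) (hv_le : ‖v‖ ≤ ‖u - v‖) :
    1 ≤ ‖‖u‖⁻¹ • u - ‖v‖⁻¹ • v‖ := by
  have hu' : 0 < ‖u‖ := norm_pos_iff.2 hu
  have hv' : 0 < ‖v‖ := norm_pos_iff.2 hv
  -- `u - v` is the longest side of the triangle `0, u, v`, so the angle at `0` is at least `π / 3`.
  have hinner : 2 * ⟪u, v⟫ ≤ ‖u‖ * ‖v‖ := by
    have h := norm_sub_sq_real u v
    rcases le_total ‖u‖ ‖v‖ with h' | h' <;> nlinarith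
  have hsq : ‖‖u‖⁻¹ • u - ‖v‖⁻¹ • v‖ ^ 2 = 2 - 2 * (⟪u, v⟫ / (‖u‖ * ‖v‖)) := by
    rw [norm_sub_sq_real, real_inner_smul_left, real_inner_smul_right]
    simp only [norm_smul, norm_inv, norm_norm]
    field_simp
    ring
  have : ⟪u, v⟫ / (‖u‖ * ‖v‖) ≤ 1 / 2 := by
    rw [div_le_iff₀ (by positivity)]; linarith
  exact (one_le_sq_iff₀ (norm_nonneg _)).1 (by linarith)

lemma card_le_of_norm_le_two_of_one_le_norm_sub {ι E : Type*} [Fintype ι] [NormedAddCommGroup E]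
    [InnerProductSpace ℝ E] [FiniteDimensional ℝ E] (u : ι → E) (hu : ∀ i, ‖u i‖ ≤ 2)
    (hsep : ∀ i j, i ≠ j → 1 ≤ ‖u i - u j‖) : Fintype.card ι ≤ 5 ^ Module.finrank ℝ E := by
  classical
  have hinj : Function.Injective u := fun i j hij => by
    by_contra h
    have := hsep i j h
    norm_num [hij] at this
  rw [← Finset.card_univ, ← Finset.card_image_of_injective _ hinj]
  refine Besicovitch.card_le_of_separated _ (by simpa using hu) ?_
  simp only [Finset.mem_image, Finset.mem_univ, true_and]
  rintro _ ⟨i, rfl⟩ _ ⟨j, rfl⟩ hij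
  exact hsep i j (ne_of_apply_ne u hij)

theorem card_le_of_notMem_closedBall_of_forall_mem_closedBall {ι E : Type*} [Fintype ι]
    [NormedAddCommGroup E] [InnerProductSpace ℝ E] [FiniteDimensional ℝ E]
    (x : ι → E) (r : ι → ℝ) (hx : ∀ i j, j ≠ i → x i ∉ closedBall (x j) (r j)) {z : E}
    (hz : ∀ i, z ∈ closedBall (x i) (r i)) : Fintype.card ι ≤ 5 ^ Module.finrank ℝ E := by
  rcases subsingleton_or_nontrivial ι with hι | hι
  · exact Fintype.card_le_one_iff_subsingleton.2 hι |>.trans (Nat.one_le_pow' _ _)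
  have hne : ∀ i, x i - z ≠ 0 := fun i => by
    obtain ⟨j, hj⟩ := exists_ne i
    exact sub_ne_zero.2 fun h => hx i j hj (h ▸ hz j)
  have hlongest : ∀ i j, i ≠ j → ‖x i - z‖ ≤ ‖(x i - z) - (x j - z)‖ := fun i j hij => by
    have hzi := mem_closedBall'.1 (hz i)
    have hxj := not_le.1 (mt mem_closedBall.2 (hx j i hij))
    rw [sub_sub_sub_cancel_right, ← dist_eq_norm, ← dist_eq_norm, dist_comm (x i) (x j)]
    linarith
  refine card_le_of_norm_le_two_of_one_le_norm_sub (fun i => ‖x i - z‖⁻¹ • (x i - z))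
    (fun i => by simp [norm_smul, hne i]) fun i j hij => ?_
  refine one_le_norm_sub_normalize_of_norm_le_norm_sub (hne i) (hne j) (hlongest i j hij) ?_
  exact (hlongest j i hij.symm).trans_eq (norm_sub_rev _ _)

/-- Weak Besicovitch covering property for the Euclidean distance on `ℝⁿ`:
there is an integer `K ≥ 1`, depending only on `n`, bounding the cardinality of any
family of closed Euclidean balls such that no ball contains the center of another one
and all balls have a common point. -/
theorem stmt8 (n : ℕ) :
    ∃ K : ℕ, 1 ≤ K ∧
      ∀ (k : ℕ) (x : Fin k → EuclideanSpace ℝ (Fin n)) (r : Fin k → ℝ),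
        (∀ i, 0 < r i) →
        (∀ i j : Fin k, j ≠ i → x i ∉ closedBall (x j) (r j)) →
        (⋂ i, closedBall (x i) (r i)).Nonempty →
        k ≤ K := by
  refine ⟨5 ^ n, Nat.one_le_pow' _ _, fun k x r _ hx ⟨z, hz⟩ => ?_⟩
  simpa using card_le_of_notMem_closedBall_of_forall_mem_closedBall x r hx (mem_iInter.1 hz)
end

section
/- Let ℝⁿ be equipped with the Euclidean distance. There is an integer N ≥ 1 (depending only on n) with the following property: for every bounded set A ⊂ ℝⁿ and every family 𝓑 of closed balls such that each point of A is the center of some ball of 𝓑, there is a countable subfamily 𝓕 ⊂ 𝓑 such that the balls of 𝓕 cover A and every point of ℝⁿ belongs to at most N balls of 𝓕, i.e. χ_A ≤ Σ_{B∈𝓕} χ_B ≤ N. -/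
open Metric Set

/-- Besicovitch covering property for the Euclidean distance on `ℝⁿ`: there is an
integer `N ≥ 1` depending only on `n` such that, for every bounded set `A` and every
family of closed balls (recorded as pairs (center, radius) with positive radius) whose
centers exhaust `A`, one can extract a countable subfamily covering `A` with overlap
at most `N` at every point. -/
theorem stmt9 (n : ℕ) :
    ∃ N : ℕ, 1 ≤ N ∧
      ∀ (A : Set (EuclideanSpace ℝ (Fin n))) (ℬ : Set (EuclideanSpace ℝ (Fin n) × ℝ)),
        Bornology.IsBounded A →
        (∀ p ∈ ℬ, 0 < p.2) →
        (∀ x ∈ A, ∃ r : ℝ, 0 < r ∧ (x, r) ∈ ℬ) →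
        ∃ F ⊆ ℬ, F.Countable ∧
          A ⊆ (⋃ p ∈ F, closedBall p.1 p.2) ∧
          ∀ y : EuclideanSpace ℝ (Fin n),
            {p ∈ F | y ∈ closedBall p.1 p.2}.encard ≤ (N : ℕ∞) := by
  obtain ⟨N, τ, hτ, hsat⟩ :=
    HasBesicovitchCovering.no_satelliteConfig (α := EuclideanSpace ℝ (Fin n))
  refine ⟨max N 1, le_max_right _ _, ?_⟩
  intro A ℬ hA hpos hcen
  rcases A.eq_empty_or_nonempty with rfl | ⟨x0, hx0⟩
  · exact ⟨∅, empty_subset _, countable_empty, by simp, by simp⟩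
  by_cases hbig : ∃ x ∈ A, ∃ r, (x, r) ∈ ℬ ∧ Metric.diam A ≤ r
  · obtain ⟨x, hx, r, hrB, hdiam⟩ := hbig
    refine ⟨{(x, r)}, by simpa using hrB, countable_singleton _, ?_, ?_⟩
    · intro a ha
      have : dist a x ≤ r := (dist_le_diam_of_mem hA ha hx).trans hdiam
      simpa using this
    · intro y
      calc {p ∈ ({(x, r)} : Set _) | y ∈ closedBall p.1 p.2}.encard
          ≤ ({(x, r)} : Set _).encard := Set.encard_le_encard (sep_subset _ _)
        _ = 1 := Set.encard_singleton _
        _ ≤ (max N 1 : ℕ∞) := by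
            exact_mod_cast Nat.one_le_cast.2 (le_max_right N 1)
  · push_neg at hbig
    -- choose for each point of A a radius
    choose ρ hρpos hρB using hcen
    have hρlt : ∀ (x : A), ρ x x.2 < Metric.diam A := fun x => hbig x x.2 _ (hρB x x.2)
    set q : Besicovitch.BallPackage A (EuclideanSpace ℝ (Fin n)) :=
      { c := Subtype.val
        r := fun x => ρ x x.2
        rpos := fun x => hρpos x x.2
        r_bound := Metric.diam A
        r_le := fun x => (hρlt x).le }
    obtain ⟨s, hdisj, hcov⟩ := Besicovitch.exist_disjoint_covering_families hτ hsat q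
    set g : A → EuclideanSpace ℝ (Fin n) × ℝ := fun x => (x.1, ρ x x.2) with hg
    set F : Set (EuclideanSpace ℝ (Fin n) × ℝ) := g '' (⋃ i, s i) with hF
    have hcov' : ∀ a ∈ A, ∃ i, ∃ j ∈ s i, a ∈ ball (j : EuclideanSpace ℝ (Fin n)) (ρ j j.2) := by
      intro a ha
      have : a ∈ range q.c := ⟨⟨a, ha⟩, rfl⟩
      have := hcov this
      simp only [mem_iUnion] at this
      obtain ⟨i, j, hj, hmem⟩ := this
      exact ⟨i, j, hj, hmem⟩
    obtain ⟨i0, -, -, -⟩ := hcov' x0 hx0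
    haveI : Nonempty (Fin N) := ⟨i0⟩
    refine ⟨F, ?_, ?_, ?_, ?_⟩
    · rintro p ⟨x, -, rfl⟩
      exact hρB x x.2
    · refine Set.Countable.image ?_ _
      refine countable_iUnion fun i => ?_
      refine ((hdisj i).mono fun j => ball_subset_closedBall).countable_of_isOpen
        (fun j _ => isOpen_ball) fun j _ => nonempty_ball.2 (hρpos j j.2)
    · intro a ha
      obtain ⟨i, j, hj, hmem⟩ := hcov' a ha
      refine mem_iUnion₂.2 ⟨g j, ⟨j, mem_iUnion.2 ⟨i, hj⟩, rfl⟩, ball_subset_closedBall hmem⟩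
    · intro y
      classical
      set P : EuclideanSpace ℝ (Fin n) × ℝ → Fin N → Prop := fun p i => ∃ x ∈ s i, g x = p
      set h : EuclideanSpace ℝ (Fin n) × ℝ → Fin N := fun p =>
        if hp : ∃ i, P p i then hp.choose else Classical.arbitrary _
      have key : {p ∈ F | y ∈ closedBall p.1 p.2}.encard ≤ (univ : Set (Fin N)).encard := by
        refine Set.encard_le_encard_of_injOn (f := h) (fun p _ => mem_univ _) ?_
        rintro p ⟨hpF, hpy⟩ p' ⟨hpF', hpy'⟩ hpp'
        obtain ⟨x, hxU, hxp⟩ := hpF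
        obtain ⟨x', hxU', hxp'⟩ := hpF'
        obtain ⟨i, hi⟩ := mem_iUnion.1 hxU
        obtain ⟨i', hi'⟩ := mem_iUnion.1 hxU'
        have hp : ∃ i, P p i := ⟨i, x, hi, hxp⟩
        have hp' : ∃ i, P p' i := ⟨i', x', hi', hxp'⟩
        simp only [h, dif_pos hp, dif_pos hp'] at hpp'
        obtain ⟨z, hz, hzp⟩ := hp.choose_spec
        obtain ⟨z', hz', hzp'⟩ := hp'.choose_spec
        rw [hpp'] at hz
        -- y belongs to both closed balls of z and z', both in s (hp'.choose)
        have hyz : y ∈ closedBall (z : EuclideanSpace ℝ (Fin n)) (ρ z z.2) := by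
          rw [← hzp] at hpy; exact hpy
        have hyz' : y ∈ closedBall (z' : EuclideanSpace ℝ (Fin n)) (ρ z' z'.2) := by
          rw [← hzp'] at hpy'; exact hpy'
        have hzz : z = z' := by
          by_contra hne
          exact (hdisj hp'.choose hz hz' hne).le_bot ⟨hyz, hyz'⟩
        rw [← hzp, ← hzp', hzz]
      refine key.trans ?_
      rw [Set.encard_univ]
      simp only [ENat.card_eq_coe_fintype_card, Fintype.card_fin]
      exact_mod_cast le_max_left N 1
end

section
/- Let ℝⁿ be equipped with the Euclidean distance. There is an integer Q ≥ 1 (depending only on n) with the following property: for every bounded set A ⊂ ℝⁿ and every family 𝓑 of closed balls such that each point of A is the center of some ball of 𝓑, there are countable subfamilies 𝓑₁,…,𝓑_Q ⊂ 𝓑 such that each 𝓑_i is disjointed (B ∩ B' = ∅ for distinct B, B' ∈ 𝓑_i) and A ⊆ ⋃_{i=1}^Q ⋃_{B∈𝓑_i} B. -/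
open Metric Set

/-- Strong Besicovitch covering property for the Euclidean distance on `ℝⁿ`: there is
an integer `Q ≥ 1` depending only on `n` such that, for every bounded set `A` and every
family of closed balls (recorded as pairs (center, radius) with positive radius) whose
centers exhaust `A`, one can extract `Q` countable disjointed subfamilies whose union
covers `A`. -/
theorem stmt10 (n : ℕ) :
    ∃ Q : ℕ, 1 ≤ Q ∧
      ∀ (A : Set (EuclideanSpace ℝ (Fin n))) (ℬ : Set (EuclideanSpace ℝ (Fin n) × ℝ)),
        Bornology.IsBounded A →
        (∀ p ∈ ℬ, 0 < p.2) →
        (∀ x ∈ A, ∃ r : ℝ, 0 < r ∧ (x, r) ∈ ℬ) →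
        ∃ 𝓑 : Fin Q → Set (EuclideanSpace ℝ (Fin n) × ℝ),
          (∀ i, 𝓑 i ⊆ ℬ) ∧ (∀ i, (𝓑 i).Countable) ∧
          (∀ i, (𝓑 i).PairwiseDisjoint fun p => closedBall p.1 p.2) ∧
          A ⊆ ⋃ i, ⋃ p ∈ 𝓑 i, closedBall p.1 p.2 := by
  set E := EuclideanSpace ℝ (Fin n)
  obtain ⟨N, τ, hτ, hN⟩ :=
    HasBesicovitchCovering.no_satelliteConfig (α := E)
  refine ⟨N + 1, le_add_self, ?_⟩
  intro A ℬ hA hpos hcov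
  -- choose for each x ∈ A a radius r x with (x, r x) ∈ ℬ
  choose! r hr hrB using hcov
  by_cases hbig : ∃ x ∈ A, Metric.diam A ≤ r x
  · -- a single big ball covers A
    obtain ⟨x, hx, hxr⟩ := hbig
    refine ⟨fun i => if i = 0 then {(x, r x)} else ∅, ?_, ?_, ?_, ?_⟩
    · intro i p hp
      simp only at hp
      split_ifs at hp with h
      · rcases hp with rfl; exact hrB x hx
      · exact absurd hp (notMem_empty p)
    · intro i; simp only; split_ifs <;> simp
    · intro i; simp only; split_ifs with h
      · exact Set.pairwiseDisjoint_singleton _ _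
      · exact Set.pairwiseDisjoint_empty
    · intro y hy
      refine mem_iUnion.2 ⟨0, ?_⟩
      simp only [if_pos rfl, mem_iUnion]
      exact ⟨(x, r x), rfl, mem_closedBall.2 ((Metric.dist_le_diam_of_mem hA hy hx).trans hxr)⟩
  push_neg at hbig
  -- all chosen radii are bounded, so we can build a ball package
  let q : Besicovitch.BallPackage A E :=
    { c := fun a => (a : E)
      r := fun a => r a
      rpos := fun a => hr a a.2
      r_bound := Metric.diam A
      r_le := fun a => (hbig a a.2).le }
  obtain ⟨s, hs_disj, hs_cov⟩ := Besicovitch.exist_disjoint_covering_families hτ hN q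
  refine ⟨fun i => Fin.cases (∅ : Set (E × ℝ)) (fun j => (fun a : A => ((a : E), r a)) '' s j) i,
    ?_, ?_, ?_, ?_⟩
  · intro i
    refine Fin.cases ?_ ?_ i
    · exact empty_subset _
    · rintro j p ⟨a, _, rfl⟩
      exact hrB a a.2
  · intro i
    refine Fin.cases ?_ ?_ i
    · exact countable_empty
    · intro j
      refine Set.Countable.image ?_ _
      refine (hs_disj j).countable_of_nonempty_interior fun a _ => ?_
      rw [interior_closedBall _ (hr a a.2).ne']
      exact ⟨a.1, mem_ball_self (hr a a.2)⟩
  · intro i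
    refine Fin.cases ?_ ?_ i
    · exact Set.pairwiseDisjoint_empty
    · intro j
      rintro p ⟨a, ha, rfl⟩ p' ⟨a', ha', rfl⟩ hne
      have hne' : a ≠ a' := fun h => hne (by rw [h])
      exact hs_disj j ha ha' hne'
  · intro y hy
    have : (y : E) ∈ range q.c := ⟨⟨y, hy⟩, rfl⟩
    have := hs_cov this
    simp only [mem_iUnion] at this
    obtain ⟨j, a, ha, hya⟩ := this
    refine mem_iUnion.2 ⟨j.succ, ?_⟩
    simp only [Fin.cases_succ, mem_iUnion]
    exact ⟨((a : E), r a), ⟨a, ha, rfl⟩, ball_subset_closedBall hya⟩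
end

section
/- Every Radon measure over ℝⁿ (i.e. every locally finite Borel regular measure) is of Vitali type with respect to the Euclidean distance: for every A ⊂ ℝⁿ and every family 𝓑 of closed Euclidean balls such that each point of A is the center of balls of 𝓑 of arbitrarily small radius, there exists a countable disjointed subfamily 𝓕 ⊂ 𝓑 with λ(A \ ⋃_{B∈𝓕} B) = 0. -/
open MeasureTheory Metric Set
open scoped ENNReal

/-- Every Radon (i.e. locally finite Borel regular) measure over the Euclidean space `ℝⁿ`
is of Vitali type with respect to the Euclidean distance. -/
theorem stmt11 (n : ℕ) (lam : Measure (EuclideanSpace ℝ (Fin n)))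
    [IsLocallyFiniteMeasure lam] :
    IsVitaliType lam := by
  intro A ℬ _hpos hsmall
  obtain ⟨t, t_count, _ts, tf, hμ, tdisj⟩ :=
    Besicovitch.exists_disjoint_closedBall_covering_ae_aux lam
      (fun x => {r | (x, r) ∈ ℬ}) A (by
        intro x hx δ hδ
        obtain ⟨r, hr0, hrδ, hrB⟩ := hsmall x hx δ hδ
        exact ⟨r, hrB, hr0, hrδ⟩)
  exact ⟨t, fun p hp => tf p hp, t_count, tdisj, hμ⟩
end

section
/- Let (X,d) be a separable metric space and let λ be a locally finite Borel regular measure over X. Assume there exist constants C > 0 and N > 0 such that for every bounded set A ⊂ X and every family 𝓑 of closed balls such that each point of A is the center of some ball of 𝓑, there is a countable subfamily 𝓕 ⊂ 𝓑 with λ(A) ≤ C·λ(⋃_{B∈𝓕} B) and Σ_{B∈𝓕} χ_B ≤ N. Then the differentiation theorem holds for λ: for every f ∈ L¹_loc(λ), lim_{r→0} (1/λ(B(x,r))) ∫_{B(x,r)} f(y) dλ(y) = f(x) for λ-almost every x ∈ X. -/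
open MeasureTheory Metric Filter Set
open scoped ENNReal NNReal Topology

/-- The differentiation theorem holds for `lam`: averages on small closed balls of any
locally integrable function converge a.e. to the function. -/
def DiffThmHolds {X : Type*} [MetricSpace X] [MeasurableSpace X] (lam : Measure X) : Prop :=
  ∀ f : X → ℝ, (∀ x : X, ∃ U ∈ 𝓝 x, IntegrableOn f U lam) →
    ∀ᵐ x ∂lam, Filter.Tendsto
      (fun r : ℝ => ((lam (closedBall x r)).toReal)⁻¹ * ∫ y in closedBall x r, f y ∂lam)
      (𝓝[>] (0:ℝ)) (𝓝 (f x))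

/-!
The covering hypothesis gives a weak-type estimate for the maximal function: if every point of a
bounded set `A` is the centre of a ball `B ⊆ K` with `t λ(B) ≤ ∫_B w`, then `t λ(A) ≤ C N ∫_K w`,
by comparing `λ(A)` with the sum over the selected balls and using that they overlap at most
`N` times. Near a point, `f` is approximated in `L¹` by a bounded continuous `h`, whose ball
averages converge at every point of the support of `λ`. Where the averages of `f` stay `3t` away
from `f(x)`, either the maximal function of `|f - h|` or `|f - h|` itself is at least `t`; both
sets have measure `O(‖f - h‖₁ / t)`, which is arbitrarily small.
-/

section Overlap

variable {α ι : Type*}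

theorem tsum_indicator_le_of_encard_le {S : Set ι} {s : ι → Set α} {n : ℕ} (w : α → ℝ≥0∞)
    {y : α} (hy : {i ∈ S | y ∈ s i}.encard ≤ n) :
    ∑' i : S, (s i).indicator w y ≤ n * w y := by
  calc ∑' i : S, (s i).indicator w y = ∑' _ : ↥{i ∈ S | y ∈ s i}, w y := by
        rw [tsum_subtype S fun i => (s i).indicator w y,
          tsum_subtype {i ∈ S | y ∈ s i} fun _ => w y]
        congr 1 with i
        by_cases hi : i ∈ S <;> by_cases hy : y ∈ s i <;> simp [hi, hy]
    _ = {i ∈ S | y ∈ s i}.encard * w y := ENNReal.tsum_set_const _ _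
    _ ≤ n * w y := by gcongr; exact_mod_cast hy

theorem tsum_setLIntegral_le_of_encard_le [MeasurableSpace α] {μ : Measure α} {S : Set ι}
    (hS : S.Countable) {s : ι → Set α} (hs : ∀ i ∈ S, MeasurableSet (s i)) {n : ℕ}
    (hn : ∀ y, {i ∈ S | y ∈ s i}.encard ≤ n) {w : α → ℝ≥0∞} (hw : AEMeasurable w μ) :
    ∑' i : S, ∫⁻ y in s i, w y ∂μ ≤ n * ∫⁻ y, w y ∂μ := by
  have : Countable S := hS.to_subtype
  calc ∑' i : S, ∫⁻ y in s i, w y ∂μ = ∫⁻ y, ∑' i : S, (s i).indicator w y ∂μ := by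
        rw [lintegral_tsum fun i : S => hw.indicator (hs i.1 i.2)]
        exact tsum_congr fun i => (lintegral_indicator (hs i.1 i.2) w).symm
    _ ≤ ∫⁻ y, n * w y ∂μ := lintegral_mono fun y => tsum_indicator_le_of_encard_le w (hn y)
    _ = n * ∫⁻ y, w y ∂μ := lintegral_const_mul'' _ hw

end Overlap

theorem ENNReal.eq_zero_of_forall_pos_mul_le_mul {a c D : ℝ≥0∞} (hc : c ≠ 0) (hD : D ≠ ∞)
    (h : ∀ η, 0 < η → c * a ≤ D * η) : a = 0 := by
  have hlim : Tendsto (fun η => D * η) (𝓝[>] 0) (𝓝 0) := by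
    simpa using (ENNReal.Tendsto.const_mul tendsto_id (Or.inr hD)).mono_left
      (nhdsWithin_le_nhds (a := (0 : ℝ≥0∞)))
  have : c * a ≤ 0 := ge_of_tendsto hlim (eventually_nhdsWithin_of_forall h)
  exact (mul_eq_zero.1 (nonpos_iff_eq_zero.1 this)).resolve_left hc

theorem ae_tendsto_of_forall_pos_ae_eventually_dist_lt {α β Y : Type*} [MeasurableSpace α]
    {μ : Measure α} [PseudoMetricSpace Y] {l : Filter β} {p : α → Prop} {u : α → β → Y}
    {v : α → Y} (h : ∀ ε > 0, ∀ᵐ x ∂μ, p x → ∀ᶠ r in l, dist (u x r) (v x) < ε) :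
    ∀ᵐ x ∂μ, p x → Tendsto (u x) l (𝓝 (v x)) := by
  have hn : ∀ᵐ x ∂μ, ∀ n : ℕ, p x → ∀ᶠ r in l, dist (u x r) (v x) < 1 / ((n : ℝ) + 1) :=
    ae_all_iff.2 fun n => h _ Nat.one_div_pos_of_nat
  filter_upwards [hn] with x hx hpx
  refine Metric.tendsto_nhds.2 fun ε hε => ?_
  obtain ⟨n, hnε⟩ := exists_nat_one_div_lt hε
  exact (hx n hpx).mono fun r hr => hr.trans hnε

theorem ae_of_forall_exists_nhds {X : Type*} [TopologicalSpace X] [SecondCountableTopology X]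
    [MeasurableSpace X] {μ : Measure X} {p : X → Prop}
    (h : ∀ z, ∃ U ∈ 𝓝 z, ∀ᵐ x ∂μ, x ∈ U → p x) : ∀ᵐ x ∂μ, p x := by
  rw [ae_iff]
  refine measure_null_of_locally_null _ fun z _ => ?_
  obtain ⟨U, hU, hUp⟩ := h z
  refine ⟨_, inter_mem_nhdsWithin _ hU, measure_mono_null ?_ (ae_iff.1 hUp)⟩
  exact fun x hx hpx => hx.1 (hpx hx.2)

theorem dist_setAverage_le {α E : Type*} [MeasurableSpace α] [NormedAddCommGroup E]
    [NormedSpace ℝ E] {μ : Measure α} {s : Set α} {f g : α → E} (hs : μ s ≠ ∞)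
    (hf : IntegrableOn f s μ) (hg : IntegrableOn g s μ) {t : ℝ} (ht : 0 ≤ t)
    (hfg : ∫⁻ x in s, ‖f x - g x‖ₑ ∂μ ≤ ENNReal.ofReal t * μ s) :
    dist (⨍ x in s, f x ∂μ) (⨍ x in s, g x ∂μ) ≤ t := by
  have hfin : ENNReal.ofReal t * μ s ≠ ∞ := ENNReal.mul_ne_top ENNReal.ofReal_ne_top hs
  have hint : ‖∫ x in s, (f x - g x) ∂μ‖ ≤ t * μ.real s := by
    calc ‖∫ x in s, (f x - g x) ∂μ‖ ≤ (∫⁻ x in s, ‖f x - g x‖ₑ ∂μ).toReal := by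
          simpa using ENNReal.toReal_mono (ne_top_of_le_ne_top hfin hfg)
            (enorm_integral_le_lintegral_enorm _)
      _ ≤ (ENNReal.ofReal t * μ s).toReal := ENNReal.toReal_mono hfin hfg
      _ = t * μ.real s := by rw [ENNReal.toReal_mul, ENNReal.toReal_ofReal ht, measureReal_def]
  rw [dist_eq_norm, setAverage_eq, setAverage_eq, ← smul_sub, ← integral_sub hf hg, norm_smul,
    Real.norm_eq_abs, abs_inv, abs_of_nonneg measureReal_nonneg]
  rcases eq_or_ne (μ.real s) 0 with h0 | h0
  · simpa [h0] using ht
  · calc (μ.real s)⁻¹ * ‖∫ x in s, (f x - g x) ∂μ‖ ≤ (μ.real s)⁻¹ * (t * μ.real s) := by gcongr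
      _ = t := by field_simp

theorem tendsto_setAverage_closedBall_of_continuousAt {X : Type*} [MetricSpace X]
    [MeasurableSpace X] [OpensMeasurableSpace X] {μ : Measure X} [IsLocallyFiniteMeasure μ]
    {h : X → ℝ} {x : X} (hx : x ∈ μ.support) (hc : ContinuousAt h x)
    (hm : StronglyMeasurableAtFilter h (𝓝 x) μ) :
    Tendsto (fun r => ⨍ y in closedBall x r, h y ∂μ) (𝓝[>] 0) (𝓝 (h x)) := by
  have hs : Tendsto (closedBall x) (𝓝[>] (0 : ℝ)) (𝓝 x).smallSets :=
    (tendsto_closedBall_smallSets x).mono_left nhdsWithin_le_nhds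
  have hpos : ∀ᶠ r in 𝓝[>] (0 : ℝ), μ.real (closedBall x r) ≠ 0 := by
    filter_upwards [hs.eventually (μ.finiteAt_nhds x).eventually, self_mem_nhdsWithin]
      with r hfin hr
    exact (measureReal_ne_zero_iff hfin.ne).2
      ((Measure.mem_support_iff_forall x).1 hx _ (closedBall_mem_nhds x hr)).ne'
  rw [← tendsto_sub_nhds_zero_iff]
  refine (hc.integral_sub_linear_isLittleO_ae hm hs).tendsto_div_nhds_zero.congr' ?_
  filter_upwards [hpos] with r hr
  rw [setAverage_eq, smul_eq_mul, smul_eq_mul]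
  field_simp

section Covering

variable {X : Type*} [MetricSpace X] [MeasurableSpace X]

def BoundedOverlapCovering (lam : Measure X) (C : ℝ≥0) (N : ℕ) : Prop :=
  ∀ (A : Set X) (ℬ : Set (X × ℝ)), Bornology.IsBounded A → (∀ p ∈ ℬ, 0 < p.2) →
    (∀ x ∈ A, ∃ r : ℝ, 0 < r ∧ (x, r) ∈ ℬ) →
    ∃ F ⊆ ℬ, F.Countable ∧ lam A ≤ (C : ℝ≥0∞) * lam (⋃ p ∈ F, closedBall p.1 p.2) ∧
      ∀ y : X, {p ∈ F | y ∈ closedBall p.1 p.2}.encard ≤ (N : ℕ∞)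

variable [OpensMeasurableSpace X] {lam : Measure X} {C : ℝ≥0} {N : ℕ}

namespace BoundedOverlapCovering

theorem mul_measure_le (hcov : BoundedOverlapCovering lam C N) {A K : Set X}
    (hA : Bornology.IsBounded A) {w : X → ℝ≥0∞} (hw : AEMeasurable w (lam.restrict K))
    {T : ℝ≥0∞} (hAK : ∀ x ∈ A, ∃ r, 0 < r ∧ closedBall x r ⊆ K ∧
      T * lam (closedBall x r) ≤ ∫⁻ y in closedBall x r, w y ∂lam) :
    T * lam A ≤ C * N * ∫⁻ y in K, w y ∂lam := by
  obtain ⟨F, hFB, hFc, hAF, hFN⟩ := hcov A {p | 0 < p.2 ∧ closedBall p.1 p.2 ⊆ K ∧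
      T * lam (closedBall p.1 p.2) ≤ ∫⁻ y in closedBall p.1 p.2, w y ∂lam} hA
    (fun p hp => hp.1) fun x hx => by
      obtain ⟨r, hr, hrK, hrT⟩ := hAK x hx
      exact ⟨r, hr, hr, hrK, hrT⟩
  calc T * lam A ≤ C * (T * lam (⋃ p ∈ F, closedBall p.1 p.2)) := by
        rw [mul_left_comm]; gcongr
    _ ≤ C * ∑' p : F, T * lam (closedBall p.1.1 p.1.2) := by
        rw [ENNReal.tsum_mul_left]; gcongr; exact measure_biUnion_le lam hFc _
    _ ≤ C * ∑' p : F, ∫⁻ y in closedBall p.1.1 p.1.2, w y ∂(lam.restrict K) := by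
        gcongr with p
        rw [Measure.restrict_restrict_of_subset (hFB p.2).2.1]
        exact (hFB p.2).2.2
    _ ≤ C * (N * ∫⁻ y in K, w y ∂lam) := by
        gcongr
        exact tsum_setLIntegral_le_of_encard_le hFc (fun p _ => measurableSet_closedBall) hFN hw
    _ = C * N * ∫⁻ y in K, w y ∂lam := (mul_assoc _ _ _).symm

end BoundedOverlapCovering

end Covering

section Differentiation

variable {X : Type*} [MetricSpace X] [MeasurableSpace X] [OpensMeasurableSpace X]
  {lam : Measure X} [IsLocallyFiniteMeasure lam]

theorem eventually_dist_setAverage_closedBall_lt {K : Set X} (hK : lam K ≠ ∞) {x : X}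
    (hx : x ∈ lam.support) {δ : ℝ} (hδ : 0 < δ) (hxK : closedBall x δ ⊆ K) {f h : X → ℝ}
    (hf : IntegrableOn f K lam) (hh : IntegrableOn h K lam) (hhc : ContinuousAt h x) {t : ℝ}
    (hfh : ∀ r, 0 < r → r < δ →
      ∫⁻ y in closedBall x r, ‖f y - h y‖ₑ ∂lam ≤ ENNReal.ofReal t * lam (closedBall x r))
    (hfhx : ‖f x - h x‖ₑ < ENNReal.ofReal t) :
    ∀ᶠ r in 𝓝[>] 0, dist (⨍ y in closedBall x r, f y ∂lam) (f x) < 3 * t := by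
  have ht : 0 < t := ENNReal.ofReal_pos.1 (pos_of_gt hfhx)
  have hKx : K ∈ 𝓝 x := mem_of_superset (closedBall_mem_nhds x hδ) hxK
  have hlim := tendsto_setAverage_closedBall_of_continuousAt hx hhc
    ⟨K, hKx, hh.aestronglyMeasurable⟩
  have hhf : dist (h x) (f x) < t := by
    rwa [dist_comm, dist_eq_norm, ← ENNReal.ofReal_lt_ofReal_iff ht, ofReal_norm]
  filter_upwards [Metric.tendsto_nhds.1 hlim t ht, Ioo_mem_nhdsGT hδ] with r hr hrδ
  have hrK : closedBall x r ⊆ K := (closedBall_subset_closedBall hrδ.2.le).trans hxK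
  have hfh' : dist (⨍ y in closedBall x r, f y ∂lam) (⨍ y in closedBall x r, h y ∂lam) ≤ t :=
    dist_setAverage_le (ne_top_of_le_ne_top hK (measure_mono hrK)) (hf.mono_set hrK)
      (hh.mono_set hrK) ht.le (hfh r hrδ.1 hrδ.2)
  linarith [dist_triangle4 (⨍ y in closedBall x r, f y ∂lam) (⨍ y in closedBall x r, h y ∂lam)
    (h x) (f x)]

theorem BoundedOverlapCovering.mul_measure_not_eventually_dist_setAverage_lt_le
    {C : ℝ≥0} {N : ℕ} (hcov : BoundedOverlapCovering lam C N) {A K : Set X}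
    (hA : Bornology.IsBounded A) {δ : ℝ} (hδ : 0 < δ) (hAK : ∀ x ∈ A, closedBall x δ ⊆ K)
    (hK : lam K ≠ ∞) {f h : X → ℝ} (hf : IntegrableOn f K lam) (hh : IntegrableOn h K lam)
    (hhc : Continuous h) (t : ℝ) :
    ENNReal.ofReal t * lam {x ∈ A ∩ lam.support |
        ¬∀ᶠ r in 𝓝[>] 0, dist (⨍ y in closedBall x r, f y ∂lam) (f x) < 3 * t}
      ≤ (C * N + 1) * ∫⁻ y in K, ‖f y - h y‖ₑ ∂lam := by
  set w : X → ℝ≥0∞ := fun y => ‖f y - h y‖ₑ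
  have hw : AEMeasurable w (lam.restrict K) := (hf.sub hh).aestronglyMeasurable.enorm
  set M := {x ∈ A | ∃ r, 0 < r ∧ r < δ ∧
    ENNReal.ofReal t * lam (closedBall x r) ≤ ∫⁻ y in closedBall x r, w y ∂lam}
  have hM : ENNReal.ofReal t * lam M ≤ C * N * ∫⁻ y in K, w y ∂lam := by
    refine hcov.mul_measure_le (hA.subset (sep_subset _ _)) hw fun x hx => ?_
    obtain ⟨r, hr, hrδ, hrT⟩ := hx.2
    exact ⟨r, hr, (closedBall_subset_closedBall hrδ.le).trans (hAK x hx.1), hrT⟩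
  have hL : ENNReal.ofReal t * lam ({x | ENNReal.ofReal t ≤ w x} ∩ K)
      ≤ ∫⁻ y in K, w y ∂lam :=
    (mul_le_mul' le_rfl (Measure.le_restrict_apply _ _)).trans (mul_meas_ge_le_lintegral₀ hw _)
  have hsub : {x ∈ A ∩ lam.support |
      ¬∀ᶠ r in 𝓝[>] 0, dist (⨍ y in closedBall x r, f y ∂lam) (f x) < 3 * t}
      ⊆ M ∪ {x | ENNReal.ofReal t ≤ w x} ∩ K := by
    rintro x ⟨⟨hxA, hxs⟩, hbad⟩
    by_contra hx
    obtain ⟨hxM, hxL⟩ := not_or.1 hx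
    exact hbad <| eventually_dist_setAverage_closedBall_lt hK hxs hδ (hAK x hxA) hf hh
      hhc.continuousAt (fun r hr hrδ => (lt_of_not_ge fun hle => hxM ⟨hxA, r, hr, hrδ, hle⟩).le)
      (lt_of_not_ge fun hle => hxL ⟨hle, hAK x hxA (mem_closedBall_self hδ.le)⟩)
  calc _ ≤ ENNReal.ofReal t * (lam M + lam ({x | ENNReal.ofReal t ≤ w x} ∩ K)) := by
        gcongr; exact (measure_mono hsub).trans (measure_union_le _ _)
    _ ≤ C * N * ∫⁻ y in K, w y ∂lam + ∫⁻ y in K, w y ∂lam := by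
        rw [mul_add]; gcongr
    _ = (C * N + 1) * ∫⁻ y in K, w y ∂lam := by ring

end Differentiation

namespace BoundedOverlapCovering

variable {X : Type*} [MetricSpace X] [MeasurableSpace X] [BorelSpace X]
  {lam : Measure X} [IsLocallyFiniteMeasure lam] {C : ℝ≥0} {N : ℕ}

theorem ae_tendsto_setAverage_closedBall_of_integrableOn (hcov : BoundedOverlapCovering lam C N)
    {A K : Set X} (hA : Bornology.IsBounded A) {δ : ℝ} (hδ : 0 < δ)
    (hAK : ∀ x ∈ A, closedBall x δ ⊆ K) (hK : lam K ≠ ∞) {f : X → ℝ} (hf : IntegrableOn f K lam) :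
    ∀ᵐ x ∂lam, x ∈ A ∩ lam.support →
      Tendsto (fun r => ⨍ y in closedBall x r, f y ∂lam) (𝓝[>] 0) (𝓝 (f x)) := by
  have : IsFiniteMeasure (lam.restrict K) := isFiniteMeasure_restrict.2 hK
  refine ae_tendsto_of_forall_pos_ae_eventually_dist_lt fun ε hε => ?_
  have ht : 0 < ε / 3 := by positivity
  rw [ae_iff]
  simp only [Classical.not_imp]
  refine ENNReal.eq_zero_of_forall_pos_mul_le_mul (ENNReal.ofReal_pos.2 ht).ne'
    (D := C * N + 1) (by finiteness) fun η hη => ?_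
  obtain ⟨h, hfh, hh⟩ := hf.exists_boundedContinuous_lintegral_sub_le hη.ne'
  have hbad := hcov.mul_measure_not_eventually_dist_setAverage_lt_le hA hδ hAK hK hf hh
    h.continuous (ε / 3)
  rw [mul_div_cancel₀ _ three_ne_zero] at hbad
  exact hbad.trans (by gcongr)

theorem exists_mem_nhds_ae_tendsto_setAverage_closedBall (hcov : BoundedOverlapCovering lam C N)
    {f : X → ℝ} (hf : LocallyIntegrable f lam) (z : X) :
    ∃ U ∈ 𝓝 z, ∀ᵐ x ∂lam, x ∈ U → x ∈ lam.support →
      Tendsto (fun r => ⨍ y in closedBall x r, f y ∂lam) (𝓝[>] 0) (𝓝 (f x)) := by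
  obtain ⟨U, hU, hfU⟩ := hf z
  obtain ⟨V, hV, hVfin⟩ := lam.finiteAt_nhds z
  obtain ⟨ε, hε, hball⟩ := Metric.mem_nhds_iff.1 (inter_mem hU hV)
  have hK : closedBall z (2 * (ε / 3)) ⊆ U ∩ V :=
    (closedBall_subset_ball (by linarith)).trans hball
  have hAK : ∀ x ∈ ball z (ε / 3), closedBall x (ε / 3) ⊆ closedBall z (2 * (ε / 3)) :=
    fun x hx => closedBall_subset_closedBall' (by linarith [mem_ball.1 hx])
  refine ⟨ball z (ε / 3), ball_mem_nhds z (by positivity), ?_⟩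
  filter_upwards [hcov.ae_tendsto_setAverage_closedBall_of_integrableOn isBounded_ball
    (by positivity) hAK ((measure_mono (hK.trans inter_subset_right)).trans_lt hVfin).ne
    (hfU.mono_set (hK.trans inter_subset_left))] with x hx hxU hxs using hx ⟨hxU, hxs⟩

end BoundedOverlapCovering

theorem stmt13_general {X : Type*} [MetricSpace X] [TopologicalSpace.SeparableSpace X]
    [MeasurableSpace X] [BorelSpace X]
    (lam : Measure X) [IsLocallyFiniteMeasure lam]
    (C : ℝ≥0) (N : ℕ)
    (hyp : ∀ (A : Set X) (ℬ : Set (X × ℝ)),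
      Bornology.IsBounded A →
      (∀ p ∈ ℬ, 0 < p.2) →
      (∀ x ∈ A, ∃ r : ℝ, 0 < r ∧ (x, r) ∈ ℬ) →
      ∃ F ⊆ ℬ, F.Countable ∧
        lam A ≤ (C : ℝ≥0∞) * lam (⋃ p ∈ F, closedBall p.1 p.2) ∧
        ∀ y : X, {p ∈ F | y ∈ closedBall p.1 p.2}.encard ≤ (N : ℕ∞)) :
    DiffThmHolds lam := by
  have : SecondCountableTopology X := UniformSpace.secondCountable_of_separable X
  intro f hf
  have hcov : BoundedOverlapCovering lam C N := hyp
  filter_upwards [ae_of_forall_exists_nhds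
      (hcov.exists_mem_nhds_ae_tendsto_setAverage_closedBall hf), lam.support_mem_ae]
    with x hx hxs
  simpa only [setAverage_eq, smul_eq_mul, measureReal_def] using hx hxs

theorem stmt13 {X : Type*} [MetricSpace X] [TopologicalSpace.SeparableSpace X]
    [MeasurableSpace X] [BorelSpace X]
    (lam : Measure X) [IsLocallyFiniteMeasure lam]
    (C : ℝ≥0) (hC : 0 < C) (N : ℕ) (hN : 0 < N)
    (hyp : ∀ (A : Set X) (ℬ : Set (X × ℝ)),
      Bornology.IsBounded A →
      (∀ p ∈ ℬ, 0 < p.2) →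
      (∀ x ∈ A, ∃ r : ℝ, 0 < r ∧ (x, r) ∈ ℬ) →
      ∃ F ⊆ ℬ, F.Countable ∧
        lam A ≤ (C : ℝ≥0∞) * lam (⋃ p ∈ F, closedBall p.1 p.2) ∧
        ∀ y : X, {p ∈ F | y ∈ closedBall p.1 p.2}.encard ≤ (N : ℕ∞)) :
    DiffThmHolds lam :=
  stmt13_general lam C N hyp
end

section
/- Let (X,d) be a separable metric space and let λ be a locally finite Borel regular measure over X. Assume there exist constants C > 0 and N > 0 such that for every bounded set A ⊂ X and every family 𝓑 of closed balls such that each point of A is the center of some ball of 𝓑, there is a countable subfamily 𝓕 ⊂ 𝓑 with λ(A) ≤ C·λ(⋃_{B∈𝓕} B) and Σ_{B∈𝓕} χ_B ≤ N. Let ν be a locally finite Borel regular measure over X mutually singular with λ. Then lim_{r→0} ν(B(x,r))/λ(B(x,r)) = 0 for λ-almost every x ∈ X. -/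
/-!
Fix `ε > 0` and let `F` be a bounded set of points of the `ν`-null set `A` at which
`ε λ(B(x,r)) ≤ ν(B(x,r))` for arbitrarily small `r`. For any open `U ⊇ A`, the covering
property applied to such balls inside `U` gives `ε λ(F) ≤ C N ν(U)`, and `ν(U)` is arbitrarily
small by outer regularity of `ν`. Hence `λ(F) = 0`, and a countable union over `ε = 1/n` and
over a cover of `X` by bounded sets finishes the proof, since `λ` lives on `A`.
-/

open MeasureTheory Metric Filter Set
open scoped ENNReal NNReal Topology

theorem tsum_measure_le_mul_measure_biUnion {α ι : Type*} [MeasurableSpace α] (μ : Measure α)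
    {F : Set ι} (hF : F.Countable) {s : ι → Set α} (hs : ∀ i ∈ F, MeasurableSet (s i)) {N : ℕ}
    (hN : ∀ y, {i ∈ F | y ∈ s i}.encard ≤ N) :
    ∑' i : F, μ (s i) ≤ N * μ (⋃ i ∈ F, s i) := by
  have : Countable F := hF.to_subtype
  have hcount : ∀ y, ∑' i : F, (s i).indicator 1 y = ({i ∈ F | y ∈ s i}.encard : ℝ≥0∞) := by
    intro y
    rw [← ENNReal.tsum_set_one, tsum_subtype F (fun i => (s i).indicator 1 y),
      tsum_subtype {i ∈ F | y ∈ s i} (fun _ => 1)]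
    congr 1
    ext i
    by_cases hi : i ∈ F <;> by_cases hy : y ∈ s i <;> simp [hi, hy]
  calc ∑' i : F, μ (s i)
      = ∑' i : F, ∫⁻ y, (s i).indicator 1 y ∂μ :=
        tsum_congr fun i => (lintegral_indicator_one (hs i i.2)).symm
    _ = ∫⁻ y, ∑' i : F, (s i).indicator 1 y ∂μ :=
        (lintegral_tsum fun i : F => (measurable_one.indicator (hs i i.2)).aemeasurable).symm
    _ ≤ ∫⁻ y, (⋃ i ∈ F, s i).indicator (fun _ => (N : ℝ≥0∞)) y ∂μ := by
        refine lintegral_mono fun y => ?_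
        by_cases hy : y ∈ ⋃ i ∈ F, s i
        · rw [indicator_of_mem hy, hcount]
          simpa using ENat.toENNReal_le.2 (hN y)
        · rw [indicator_of_notMem hy]
          refine (ENNReal.tsum_eq_zero.2 fun i => ?_).le
          exact indicator_of_notMem (fun h => hy (mem_biUnion i.2 h)) _
    _ = N * μ (⋃ i ∈ F, s i) := lintegral_indicator_const (MeasurableSet.biUnion hF hs) _

section Covering

variable {X : Type*} [MetricSpace X] [MeasurableSpace X]

/-- A ball `closedBall p.1 p.2` is encoded by the pair `p : X × ℝ`. -/
def HasBoundedOverlapCovering (μ : Measure X) (C : ℝ≥0) (N : ℕ) : Prop :=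
  ∀ (A : Set X) (ℬ : Set (X × ℝ)),
    Bornology.IsBounded A →
    (∀ p ∈ ℬ, 0 < p.2) →
    (∀ x ∈ A, ∃ r : ℝ, 0 < r ∧ (x, r) ∈ ℬ) →
    ∃ F ⊆ ℬ, F.Countable ∧
      μ A ≤ (C : ℝ≥0∞) * μ (⋃ p ∈ F, closedBall p.1 p.2) ∧
      ∀ y : X, {p ∈ F | y ∈ closedBall p.1 p.2}.encard ≤ (N : ℕ∞)

namespace HasBoundedOverlapCovering

variable [BorelSpace X] {lam : Measure X} {C : ℝ≥0} {N : ℕ}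

theorem mul_measure_le (hcov : HasBoundedOverlapCovering lam C N) (ν : Measure X)
    {ε : ℝ≥0∞} {F U : Set X} (hF : Bornology.IsBounded F) (hU : IsOpen U) (hFU : F ⊆ U)
    (hdens : ∀ x ∈ F, ∃ᶠ r in 𝓝[>] 0, ε * lam (closedBall x r) ≤ ν (closedBall x r)) :
    ε * lam F ≤ C * (N * ν U) := by
  set ℬ : Set (X × ℝ) := {p | p.1 ∈ F ∧ 0 < p.2 ∧ closedBall p.1 p.2 ⊆ U ∧
    ε * lam (closedBall p.1 p.2) ≤ ν (closedBall p.1 p.2)}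
  have hcenter : ∀ x ∈ F, ∃ r : ℝ, 0 < r ∧ (x, r) ∈ ℬ := by
    intro x hx
    obtain ⟨ρ, hρ, hρU⟩ := Metric.isOpen_iff.1 hU x (hFU hx)
    have hsmall : ∀ᶠ r in 𝓝[>] (0 : ℝ), 0 < r ∧ closedBall x r ⊆ U :=
      Filter.mem_of_superset (Ioo_mem_nhdsGT hρ) fun r hr =>
        ⟨hr.1, (closedBall_subset_ball hr.2).trans hρU⟩
    obtain ⟨r, hr, hr0, hrU⟩ := ((hdens x hx).and_eventually hsmall).exists
    exact ⟨r, hr0, hx, hr0, hrU, hr⟩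
  obtain ⟨𝓕, h𝓕ℬ, h𝓕c, hle, hov⟩ := hcov F ℬ hF (fun p hp => hp.2.1) hcenter
  calc ε * lam F ≤ ε * (C * lam (⋃ p ∈ 𝓕, closedBall p.1 p.2)) := by gcongr
    _ = C * (ε * lam (⋃ p ∈ 𝓕, closedBall p.1 p.2)) := mul_left_comm _ _ _
    _ ≤ C * ∑' p : 𝓕, ε * lam (closedBall p.1.1 p.1.2) := by
        rw [ENNReal.tsum_mul_left]
        gcongr
        exact measure_biUnion_le lam h𝓕c _
    _ ≤ C * ∑' p : 𝓕, ν (closedBall p.1.1 p.1.2) := by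
        gcongr with p
        exact (h𝓕ℬ p.2).2.2.2
    _ ≤ C * (N * ν (⋃ p ∈ 𝓕, closedBall p.1 p.2)) := by
        gcongr
        exact tsum_measure_le_mul_measure_biUnion ν h𝓕c (fun _ _ => measurableSet_closedBall) hov
    _ ≤ C * (N * ν U) := by
        gcongr
        exact iUnion₂_subset fun p hp => (h𝓕ℬ hp).2.2.1

theorem measure_eq_zero (hcov : HasBoundedOverlapCovering lam C N) {ν : Measure X}
    [ν.OuterRegular] {ε : ℝ≥0∞} (hε : ε ≠ 0) {F A : Set X} (hF : Bornology.IsBounded F)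
    (hFA : F ⊆ A) (hνA : ν A = 0)
    (hdens : ∀ x ∈ F, ∃ᶠ r in 𝓝[>] 0, ε * lam (closedBall x r) ≤ ν (closedBall x r)) :
    lam F = 0 := by
  have hsmall : ∀ δ > 0, ε * lam F ≤ C * (N * δ) := by
    intro δ hδ
    obtain ⟨U, hAU, hU, hUδ⟩ := A.exists_isOpen_lt_of_lt δ (hνA ▸ hδ)
    calc ε * lam F ≤ C * (N * ν U) := hcov.mul_measure_le ν hF hU (hFA.trans hAU) hdens
      _ ≤ C * (N * δ) := by gcongr
  have hlim : Tendsto (fun n : ℕ => (C : ℝ≥0∞) * (N * (n : ℝ≥0∞)⁻¹)) atTop (𝓝 0) := by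
    simpa using ENNReal.Tendsto.const_mul (ENNReal.Tendsto.const_mul
      ENNReal.tendsto_inv_nat_nhds_zero (Or.inr (ENNReal.natCast_ne_top N)))
      (Or.inr ENNReal.coe_ne_top)
  have hzero : ε * lam F ≤ 0 :=
    ge_of_tendsto' hlim fun n => hsmall _ (ENNReal.inv_pos.2 (ENNReal.natCast_ne_top n))
  simpa [hε] using hzero

theorem ae_eventually_lt_mul [SecondCountableTopology X]
    (hcov : HasBoundedOverlapCovering lam C N) {ν : Measure X} [ν.OuterRegular] {A : Set X}
    (hνA : ν A = 0) (hlamA : lam Aᶜ = 0) {ε : ℝ≥0∞} (hε : ε ≠ 0) :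
    ∀ᵐ x ∂lam, ∀ᶠ r in 𝓝[>] 0, ν (closedBall x r) < ε * lam (closedBall x r) := by
  set S := {x ∈ A | ∃ᶠ r in 𝓝[>] 0, ε * lam (closedBall x r) ≤ ν (closedBall x r)}
  have hS : lam S = 0 := measure_null_of_locally_null S fun x _ =>
    ⟨S ∩ ball x 1, inter_mem_nhdsWithin S (ball_mem_nhds x one_pos),
      hcov.measure_eq_zero hε (isBounded_ball.subset inter_subset_right)
        (inter_subset_left.trans fun _ hy => hy.1) hνA fun _ hy => hy.1.2⟩
  rw [ae_iff]
  refine measure_mono_null (fun x hx => ?_) (measure_union_null hS hlamA)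
  by_cases hxA : x ∈ A
  · exact Or.inl ⟨hxA, by simpa only [mem_ofPred_eq, not_eventually, not_lt] using hx⟩
  · exact Or.inr hxA

end HasBoundedOverlapCovering

end Covering

theorem stmt14_general {X : Type*} [MetricSpace X] [TopologicalSpace.SeparableSpace X]
    [MeasurableSpace X] [BorelSpace X]
    (lam : Measure X)
    (C : ℝ≥0) (N : ℕ)
    (hyp : ∀ (A : Set X) (ℬ : Set (X × ℝ)),
      Bornology.IsBounded A →
      (∀ p ∈ ℬ, 0 < p.2) →
      (∀ x ∈ A, ∃ r : ℝ, 0 < r ∧ (x, r) ∈ ℬ) →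
      ∃ F ⊆ ℬ, F.Countable ∧
        lam A ≤ (C : ℝ≥0∞) * lam (⋃ p ∈ F, closedBall p.1 p.2) ∧
        ∀ y : X, {p ∈ F | y ∈ closedBall p.1 p.2}.encard ≤ (N : ℕ∞))
    (ν : Measure X) [IsLocallyFiniteMeasure ν]
    (hsing : ∃ A : Set X, ν A = 0 ∧ lam Aᶜ = 0) :
    ∀ᵐ x ∂lam, Filter.Tendsto
      (fun r : ℝ => ν (closedBall x r) / lam (closedBall x r))
      (𝓝[>] (0:ℝ)) (𝓝 0) := by
  have : SecondCountableTopology X := UniformSpace.secondCountable_of_separable X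
  obtain ⟨A, hνA, hlamA⟩ := hsing
  have hcov : HasBoundedOverlapCovering lam C N := hyp
  have hdens := ae_all_iff.2 fun n : ℕ =>
    hcov.ae_eventually_lt_mul hνA hlamA (ENNReal.inv_ne_zero.2 (ENNReal.natCast_ne_top n))
  filter_upwards [hdens] with x hx
  refine ENNReal.tendsto_nhds_zero.2 fun η hη => ?_
  obtain ⟨n, hn⟩ := ENNReal.exists_inv_nat_lt hη.ne'
  filter_upwards [hx n] with r hr
  exact (ENNReal.div_le_of_le_mul hr.le).trans hn.le

theorem stmt14 {X : Type*} [MetricSpace X] [TopologicalSpace.SeparableSpace X]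
    [MeasurableSpace X] [BorelSpace X]
    (lam : Measure X) [IsLocallyFiniteMeasure lam]
    (C : ℝ≥0) (hC : 0 < C) (N : ℕ) (hN : 0 < N)
    (hyp : ∀ (A : Set X) (ℬ : Set (X × ℝ)),
      Bornology.IsBounded A →
      (∀ p ∈ ℬ, 0 < p.2) →
      (∀ x ∈ A, ∃ r : ℝ, 0 < r ∧ (x, r) ∈ ℬ) →
      ∃ F ⊆ ℬ, F.Countable ∧
        lam A ≤ (C : ℝ≥0∞) * lam (⋃ p ∈ F, closedBall p.1 p.2) ∧
        ∀ y : X, {p ∈ F | y ∈ closedBall p.1 p.2}.encard ≤ (N : ℕ∞))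
    (ν : Measure X) [IsLocallyFiniteMeasure ν]
    (hsing : ∃ A : Set X, ν A = 0 ∧ lam Aᶜ = 0) :
    ∀ᵐ x ∂lam, Filter.Tendsto
      (fun r : ℝ => ν (closedBall x r) / lam (closedBall x r))
      (𝓝[>] (0:ℝ)) (𝓝 0) :=
  stmt14_general lam C N hyp ν hsing
end

section
/- Let (X,d) be a doubling metric space. Then d satisfies the Besicovitch covering property (BCP) if and only if d satisfies the weak Besicovitch covering property (WBCP). -/
open Metric Set
open scoped ENNReal

/-- The distance of the metric space `X` satisfies the Besicovitch covering property:
there is `N ≥ 1` such that, for every bounded set `A` and every family of closed balls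
(recorded as pairs (center, radius) with positive radius) whose centers exhaust `A`,
one can extract a countable subfamily covering `A` with overlap at most `N` at every
point. -/
def HasBCP (X : Type*) [MetricSpace X] : Prop :=
  ∃ N : ℕ, 1 ≤ N ∧
    ∀ (A : Set X) (ℬ : Set (X × ℝ)),
      Bornology.IsBounded A →
      (∀ p ∈ ℬ, 0 < p.2) →
      (∀ x ∈ A, ∃ r : ℝ, 0 < r ∧ (x, r) ∈ ℬ) →
      ∃ F ⊆ ℬ, F.Countable ∧
        A ⊆ (⋃ p ∈ F, closedBall p.1 p.2) ∧
        ∀ y : X, {p ∈ F | y ∈ closedBall p.1 p.2}.encard ≤ (N : ℕ∞)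

/-- A Besicovitch family of closed balls (recorded as pairs (center, radius) with
positive radius): no ball contains the center of another one, and all the balls have a
common point. -/
def IsBesicovitchFamily {X : Type*} [MetricSpace X] (ℬ : Set (X × ℝ)) : Prop :=
  (∀ p ∈ ℬ, 0 < p.2) ∧
  (∀ p ∈ ℬ, ∀ q ∈ ℬ, p ≠ q → p.1 ∉ closedBall q.1 q.2) ∧
  (⋂ p ∈ ℬ, closedBall p.1 p.2).Nonempty

/-- The distance of the metric space `X` satisfies the weak Besicovitch covering
property: there is a uniform bound `K ≥ 1` on the cardinality of Besicovitch families
of balls. -/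
def HasWBCP (X : Type*) [MetricSpace X] : Prop :=
  ∃ K : ℕ, 1 ≤ K ∧ ∀ ℬ : Set (X × ℝ), IsBesicovitchFamily ℬ → ℬ.encard ≤ (K : ℕ∞)


/-!
BCP implies WBCP in any metric space: applied to the centers of a finite Besicovitch family, the
covering property must keep every ball, since no other ball contains its center, and all of these
balls contain a common point.

Conversely, unless a single ball covers `A`, all radii are at most some `R`. Sort the centers into
generations `R / 2 ^ (k + 1) < ρ x ≤ R / 2 ^ k` and, generation after generation, select a maximal
`R / 2 ^ (k + 1)`-separated set among the centers not yet covered by earlier balls. Selected balls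
of distinct generations through a common point form a Besicovitch family, so at most `K`
generations meet at a point, and doubling allows at most `D ^ 2` balls of one generation there.
-/

def IsDoublingWith (X : Type*) [PseudoMetricSpace X] (D : ℕ) : Prop :=
  ∀ (x : X) (r : ℝ), 0 < r →
    ∃ s : Finset X, s.card ≤ D ∧ closedBall x (2 * r) ⊆ ⋃ y ∈ s, closedBall y r

section Doubling

variable {X : Type*} [PseudoMetricSpace X]

namespace IsDoublingWith

variable {D : ℕ}

theorem exists_finset_cover_pow (hD : IsDoublingWith X D) (m : ℕ) {x : X} {r : ℝ}
    (hr : 0 < r) :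
    ∃ s : Finset X, s.card ≤ D ^ m ∧ closedBall x (2 ^ m * r) ⊆ ⋃ y ∈ s, closedBall y r := by
  classical
  induction m generalizing x r with
  | zero => exact ⟨{x}, by simp, by simp⟩
  | succ m ih =>
    obtain ⟨s, hs, hxs⟩ := ih (x := x) (mul_pos two_pos hr)
    choose f hf hff using fun y : X => hD y r hr
    refine ⟨s.biUnion f, ?_, ?_⟩
    · calc (s.biUnion f).card ≤ ∑ y ∈ s, (f y).card := Finset.card_biUnion_le
        _ ≤ s.card * D := Finset.sum_le_card_nsmul _ _ _ fun y _ => hf y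
        _ ≤ D ^ (m + 1) := by rw [pow_succ]; exact Nat.mul_le_mul_right D hs
    · intro z hz
      rw [pow_succ, mul_assoc] at hz
      obtain ⟨y, hy, hzy⟩ := mem_iUnion₂.1 (hxs hz)
      obtain ⟨w, hw, hzw⟩ := mem_iUnion₂.1 (hff y hzy)
      exact mem_iUnion₂.2 ⟨w, Finset.mem_biUnion.2 ⟨y, hy, hw⟩, hzw⟩

/-- Two points of `t` never lie in the same one of the `D ^ m` balls of radius `r`. -/
theorem encard_le_of_pairwise_lt_dist (hD : IsDoublingWith X D) (m : ℕ) {t : Set X} {x : X}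
    {r : ℝ} (hr : 0 < r) (ht : t ⊆ closedBall x (2 ^ m * r))
    (hsep : t.Pairwise fun a b => 2 * r < dist a b) : t.encard ≤ (D ^ m : ℕ) := by
  obtain ⟨s, hs, hts⟩ := hD.exists_finset_cover_pow m (x := x) hr
  choose! f hfs hf using fun a (ha : a ∈ t) => mem_iUnion₂.1 (hts (ht ha))
  have hinj : InjOn f t := by
    intro a ha b hb hab
    by_contra hne
    have hfb := mem_closedBall.1 (hf b hb)
    rw [← hab] at hfb
    linarith [hsep ha hb hne, mem_closedBall.1 (hf a ha), dist_triangle_right a b (f a)]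
  calc t.encard = (f '' t).encard := hinj.encard_image.symm
    _ ≤ (s : Set X).encard := encard_mono (image_subset_iff.2 hfs)
    _ ≤ (D ^ m : ℕ) := by rw [encard_coe_eq_coe_finsetCard]; exact_mod_cast hs

theorem finite_of_isBounded (hD : IsDoublingWith X D) {t : Set X} (ht : Bornology.IsBounded t)
    {ε : ℝ} (hε : 0 < ε) (hsep : t.Pairwise fun a b => ε < dist a b) : t.Finite := by
  rcases t.eq_empty_or_nonempty with rfl | ⟨x, -⟩
  · exact finite_empty
  obtain ⟨R, htR⟩ := ht.subset_closedBall x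
  obtain ⟨m, hm⟩ := pow_unbounded_of_one_lt (R / (ε / 2)) one_lt_two
  have hR : R ≤ 2 ^ m * (ε / 2) := ((div_lt_iff₀ (half_pos hε)).1 hm).le
  refine finite_of_encard_le_coe (hD.encard_le_of_pairwise_lt_dist m (half_pos hε)
    (htR.trans (closedBall_subset_closedBall hR)) ?_)
  simpa only [mul_div_cancel₀ ε two_ne_zero] using hsep

end IsDoublingWith

end Doubling

section SeparatedNet

variable {X : Type*} [PseudoMetricSpace X]

theorem exists_maximal_separated_subset (S : Set X) (ε : ℝ) :
    ∃ G ⊆ S, (G.Pairwise fun a b => ε < dist a b) ∧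
      ∀ z ∈ S \ G, ∃ x ∈ G, dist z x ≤ ε := by
  obtain ⟨G, ⟨hGS, hG⟩, hmax⟩ :=
    zorn_subset {G | G ⊆ S ∧ G.Pairwise fun a b => ε < dist a b}
    fun c hc hchain => ⟨⋃₀ c, ⟨sUnion_subset fun G hG => (hc hG).1,
      hchain.pairwise_sUnion.2 fun G hG => (hc hG).2⟩, fun _ => subset_sUnion_of_mem⟩
  refine ⟨G, hGS, hG, fun z ⟨hzS, hzG⟩ => ?_⟩
  by_contra! hfar
  have hins : insert z G ⊆ S ∧ (insert z G).Pairwise fun a b => ε < dist a b :=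
    ⟨insert_subset hzS hGS,
      hG.insert fun x hx _ => ⟨hfar x hx, dist_comm z x ▸ hfar x hx⟩⟩
  exact hzG (hmax hins (subset_insert z G) (mem_insert z G))

noncomputable def separatedNet (S : Set X) (ε : ℝ) : Set X :=
  (exists_maximal_separated_subset S ε).choose

theorem separatedNet_subset (S : Set X) (ε : ℝ) : separatedNet S ε ⊆ S :=
  (exists_maximal_separated_subset S ε).choose_spec.1

theorem pairwise_lt_dist_separatedNet (S : Set X) (ε : ℝ) :
    (separatedNet S ε).Pairwise fun a b => ε < dist a b :=
  (exists_maximal_separated_subset S ε).choose_spec.2.1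

theorem exists_mem_separatedNet_dist_le {S : Set X} {ε : ℝ} (hε : 0 ≤ ε) {z : X}
    (hz : z ∈ S) :
    ∃ x ∈ separatedNet S ε, dist z x ≤ ε := by
  by_cases hzG : z ∈ separatedNet S ε
  · exact ⟨z, hzG, by rwa [dist_self]⟩
  · exact (exists_maximal_separated_subset S ε).choose_spec.2.2 z ⟨hz, hzG⟩

end SeparatedNet

theorem Set.encard_le_of_forall_finite_subset {α : Type*} {s : Set α} {n : ℕ}
    (h : ∀ t ⊆ s, t.Finite → t.encard ≤ n) : s.encard ≤ n := by
  by_contra! hlt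
  obtain ⟨t, hts, ht⟩ := exists_subset_encard_eq (Order.add_one_le_of_lt hlt)
  have := h t hts (finite_of_encard_eq_coe (k := n + 1) (by exact_mod_cast ht))
  rw [ht, ENat.add_one_le_iff (ENat.natCast_ne_top n)] at this
  exact this.false

section Besicovitch

variable {X : Type*} [MetricSpace X]

theorem IsBesicovitchFamily.mono {ℬ 𝒞 : Set (X × ℝ)} (hℬ : IsBesicovitchFamily ℬ)
    (h𝒞 : 𝒞 ⊆ ℬ) :
    IsBesicovitchFamily 𝒞 :=
  ⟨fun p hp => hℬ.1 p (h𝒞 hp), fun p hp q hq => hℬ.2.1 p (h𝒞 hp) q (h𝒞 hq),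
    hℬ.2.2.mono (biInter_subset_biInter_left h𝒞)⟩

theorem HasBCP.hasWBCP (h : HasBCP X) : HasWBCP X := by
  obtain ⟨N, hN1, hN⟩ := h
  refine ⟨N, hN1, fun ℬ hℬ => encard_le_of_forall_finite_subset fun t htℬ htfin => ?_⟩
  obtain ⟨hpos, hcenter, z, hz⟩ := hℬ.mono htℬ
  obtain ⟨F, hFt, -, hcov, hF⟩ := hN (Prod.fst '' t) t (htfin.image _).isBounded hpos
    (by rintro _ ⟨p, hp, rfl⟩; exact ⟨p.2, hpos p hp, hp⟩)
  have htF : t ⊆ F := by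
    intro p hp
    obtain ⟨q, hqF, hpq⟩ := mem_iUnion₂.1 (hcov ⟨p, hp, rfl⟩)
    by_contra hpF
    exact hcenter p hp q (hFt hqF) (ne_of_mem_of_not_mem hqF hpF).symm hpq
  have htz : t ⊆ {p ∈ F | z ∈ closedBall p.1 p.2} :=
    fun p hp => ⟨htF hp, mem_iInter₂.1 hz p hp⟩
  exact (encard_le_encard htz).trans (hF z)

def HasWBCPWith (X : Type*) [MetricSpace X] (K : ℕ) : Prop :=
  ∀ ℬ : Set (X × ℝ), IsBesicovitchFamily ℬ → ℬ.encard ≤ K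

theorem HasWBCPWith.encard_le {K : ℕ} (hK : HasWBCPWith X K) {S : Set X} {ρ : X → ℝ} {y : X}
    (hpos : ∀ x ∈ S, 0 < ρ x) (hcenter : S.Pairwise fun a b => ρ b < dist a b)
    (hy : ∀ x ∈ S, y ∈ closedBall x (ρ x)) : S.encard ≤ K := by
  have hinj : InjOn (fun x => (x, ρ x)) S := fun a _ b _ h => congrArg Prod.fst h
  rw [← hinj.encard_image]
  refine hK _ ⟨?_, ?_, y, ?_⟩
  · rintro _ ⟨x, hx, rfl⟩
    exact hpos x hx
  · rintro _ ⟨a, ha, rfl⟩ _ ⟨b, hb, rfl⟩ hne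
    exact not_le.2 (hcenter ha hb fun h => hne (h ▸ rfl))
  · simp only [mem_iInter₂]
    rintro _ ⟨x, hx, rfl⟩
    exact hy x hx

end Besicovitch

namespace BesicovitchSelection

section Construction

variable {X : Type*}

def shell (A : Set X) (ρ : X → ℝ) (R : ℝ) (k : ℕ) : Set X :=
  {x ∈ A | R / 2 ^ (k + 1) < ρ x ∧ ρ x ≤ R / 2 ^ k}

theorem exists_mem_shell {A : Set X} {ρ : X → ℝ} {R : ℝ} {x : X} (hx : x ∈ A)
    (hpos : 0 < ρ x) (hle : ρ x ≤ R) : ∃ k, x ∈ shell A ρ R k := by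
  obtain ⟨k, hk, hk'⟩ := exists_nat_pow_near ((one_le_div hpos).2 hle) one_lt_two
  refine ⟨k, hx, ?_, ?_⟩
  · rw [div_lt_iff₀ (by positivity)]
    rwa [div_lt_iff₀ hpos, mul_comm] at hk'
  · rw [le_div_iff₀ (by positivity)]
    rwa [le_div_iff₀ hpos, mul_comm] at hk

variable [PseudoMetricSpace X] (A : Set X) (ρ : X → ℝ) (R : ℝ)

/-- `covered k` is the union of the balls of the generations `j < k`; the set `selected k`
defined below is inlined here. -/
noncomputable def covered : ℕ → Set X
  | 0 => ∅
  | k + 1 => covered k ∪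
      ⋃ x ∈ separatedNet (shell A ρ R k \ covered k) (R / 2 ^ (k + 1)), closedBall x (ρ x)

noncomputable def selected (k : ℕ) : Set X :=
  separatedNet (shell A ρ R k \ covered A ρ R k) (R / 2 ^ (k + 1))

variable {A ρ R}

theorem selected_subset (k : ℕ) : selected A ρ R k ⊆ shell A ρ R k \ covered A ρ R k :=
  separatedNet_subset _ _

theorem pos_of_mem_selected (hR : 0 ≤ R) {k : ℕ} {x : X} (hx : x ∈ selected A ρ R k) :
    0 < ρ x :=
  (div_nonneg hR (by positivity)).trans_lt (selected_subset k hx).1.2.1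

theorem covered_succ (k : ℕ) :
    covered A ρ R (k + 1) =
      covered A ρ R k ∪ ⋃ x ∈ selected A ρ R k, closedBall x (ρ x) :=
  rfl

theorem covered_mono : Monotone (covered A ρ R) :=
  monotone_nat_of_le_succ fun k => by
    rw [covered_succ]
    exact subset_union_left

theorem closedBall_subset_covered {j k : ℕ} (hjk : j < k) {x : X} (hx : x ∈ selected A ρ R j) :
    closedBall x (ρ x) ⊆ covered A ρ R k :=
  calc closedBall x (ρ x) ⊆ covered A ρ R (j + 1) :=
        (subset_biUnion_of_mem (u := fun x : X => closedBall x (ρ x)) hx).trans subset_union_right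
    _ ⊆ covered A ρ R k := covered_mono hjk

/-- The center `b` is chosen outside `covered k`, which contains the ball around `a`; and the
radius of `b` is at most `R / 2 ^ k`, which is below the radius of `a`. -/
theorem lt_dist_of_mem_selected_of_lt (hR : 0 ≤ R) {j k : ℕ} (hjk : j < k) {a b : X}
    (ha : a ∈ selected A ρ R j) (hb : b ∈ selected A ρ R k) :
    ρ a < dist a b ∧ ρ b < dist a b := by
  have hab : ρ a < dist a b := by
    by_contra! h
    exact (selected_subset k hb).2 (closedBall_subset_covered hjk ha (mem_closedBall'.2 h))
  refine ⟨hab, lt_of_le_of_lt ?_ hab⟩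
  calc ρ b ≤ R / 2 ^ k := (selected_subset k hb).1.2.2
    _ ≤ R / 2 ^ (j + 1) := div_le_div_of_nonneg_left hR (by positivity)
        (pow_le_pow_right₀ one_le_two hjk)
    _ ≤ ρ a := (selected_subset j ha).1.2.1.le

theorem lt_dist_of_mem_selected (hR : 0 ≤ R) {j k : ℕ} (hjk : j ≠ k) {a b : X}
    (ha : a ∈ selected A ρ R j) (hb : b ∈ selected A ρ R k) : ρ b < dist a b := by
  rcases hjk.lt_or_gt with h | h
  · exact (lt_dist_of_mem_selected_of_lt hR h ha hb).2
  · exact dist_comm a b ▸ (lt_dist_of_mem_selected_of_lt hR h hb ha).1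

theorem covered_subset_iUnion (k : ℕ) :
    covered A ρ R k ⊆ ⋃ j, ⋃ x ∈ selected A ρ R j, closedBall x (ρ x) := by
  induction k with
  | zero => exact empty_subset _
  | succ k ih => exact union_subset ih (subset_iUnion_of_subset k subset_rfl)

theorem subset_iUnion_selected (hρ : ∀ x ∈ A, 0 < ρ x ∧ ρ x ≤ R) :
    A ⊆ ⋃ k, ⋃ x ∈ selected A ρ R k, closedBall x (ρ x) := by
  intro x hx
  obtain ⟨hpos, hle⟩ := hρ x hx
  obtain ⟨k, hxk⟩ := exists_mem_shell hx hpos hle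
  by_cases hxU : x ∈ covered A ρ R k
  · exact covered_subset_iUnion k hxU
  have hε : 0 ≤ R / 2 ^ (k + 1) := div_nonneg (hpos.le.trans hle) (by positivity)
  have hx : x ∈ shell A ρ R k \ covered A ρ R k := ⟨hxk, hxU⟩
  obtain ⟨x', hx', hxx'⟩ := exists_mem_separatedNet_dist_le hε hx
  exact mem_iUnion.2
    ⟨k, mem_iUnion₂.2 ⟨x', hx', hxx'.trans (selected_subset k hx').1.2.1.le⟩⟩

theorem selected_finite {D : ℕ} (hD : IsDoublingWith X D) (hA : Bornology.IsBounded A)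
    (hR : 0 < R) (k : ℕ) : (selected A ρ R k).Finite :=
  hD.finite_of_isBounded (hA.subset fun _ hx => (selected_subset k hx).1.1) (by positivity)
    (pairwise_lt_dist_separatedNet _ _)

/-- The centers of the balls of generation `k` through `y` lie in the ball of radius
`R / 2 ^ k = 2 ^ 2 * (R / 2 ^ (k + 2))` around `y` and are `2 * (R / 2 ^ (k + 2))`-separated. -/
theorem encard_selected_le {D : ℕ} (hD : IsDoublingWith X D) (hR : 0 < R) (k : ℕ) (y : X) :
    {x ∈ selected A ρ R k | y ∈ closedBall x (ρ x)}.encard ≤ (D ^ 2 : ℕ) := by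
  have h4 : (2 : ℝ) ^ 2 * (R / 2 ^ (k + 2)) = R / 2 ^ k := by field_simp; ring
  have h2 : 2 * (R / 2 ^ (k + 2)) = R / 2 ^ (k + 1) := by field_simp; ring
  refine hD.encard_le_of_pairwise_lt_dist 2 (x := y) (r := R / 2 ^ (k + 2)) (by positivity) ?_ ?_
  · rintro x ⟨hx, hyx⟩
    rw [mem_closedBall, h4, dist_comm]
    exact (mem_closedBall.1 hyx).trans (selected_subset k hx).1.2.2
  · rw [h2]
    exact (pairwise_lt_dist_separatedNet _ _).mono (sep_subset _ _)

end Construction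

section Counting

variable {X : Type*} [MetricSpace X] {A : Set X} {ρ : X → ℝ} {R : ℝ}

theorem encard_generations_le {K : ℕ} (hK : HasWBCPWith X K) (hR : 0 ≤ R) (y : X) :
    {k | ∃ x ∈ selected A ρ R k, y ∈ closedBall x (ρ x)}.encard ≤ K := by
  set T := {k | ∃ x ∈ selected A ρ R k, y ∈ closedBall x (ρ x)}
  have hT : ∀ k ∈ T, ∃ x ∈ selected A ρ R k, y ∈ closedBall x (ρ x) := fun k hk => hk
  have : Nonempty X := ⟨y⟩
  choose! c hc hyc using hT
  have hsep : ∀ j ∈ T, ∀ k ∈ T, j ≠ k → ρ (c k) < dist (c j) (c k) :=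
    fun j hj k hk hjk => lt_dist_of_mem_selected hR hjk (hc j hj) (hc k hk)
  have hinj : InjOn c T := by
    intro j hj k hk h
    by_contra hjk
    have := hsep j hj k hk hjk
    rw [h, dist_self] at this
    exact this.not_gt (pos_of_mem_selected hR (hc k hk))
  rw [← hinj.encard_image]
  refine hK.encard_le (ρ := ρ) (y := y) ?_ ?_ ?_
  · rintro _ ⟨k, hk, rfl⟩
    exact pos_of_mem_selected hR (hc k hk)
  · rintro _ ⟨j, hj, rfl⟩ _ ⟨k, hk, rfl⟩ hjk
    exact hsep j hj k hk fun h => hjk (h ▸ rfl)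
  · rintro _ ⟨k, hk, rfl⟩
    exact hyc k hk

theorem encard_overlap_le {K D : ℕ} (hK : HasWBCPWith X K) (hD : IsDoublingWith X D)
    (hR : 0 < R) (y : X) :
    {x ∈ ⋃ k, selected A ρ R k | y ∈ closedBall x (ρ x)}.encard ≤ (K * D ^ 2 : ℕ) := by
  set T := {k | ∃ x ∈ selected A ρ R k, y ∈ closedBall x (ρ x)}
  have hTK : T.encard ≤ K := encard_generations_le hK hR.le y
  have hT : T.Finite := finite_of_encard_le_coe hTK
  have hsub : {x ∈ ⋃ k, selected A ρ R k | y ∈ closedBall x (ρ x)} ⊆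
      ⋃ k ∈ hT.toFinset, {x ∈ selected A ρ R k | y ∈ closedBall x (ρ x)} := by
    rintro x ⟨hx, hyx⟩
    obtain ⟨k, hxk⟩ := mem_iUnion.1 hx
    exact mem_biUnion (hT.mem_toFinset.2 ⟨x, hxk, hyx⟩) ⟨hxk, hyx⟩
  calc _ ≤ _ := encard_le_encard hsub
    _ ≤ ∑ k ∈ hT.toFinset, {x ∈ selected A ρ R k | y ∈ closedBall x (ρ x)}.encard :=
        hT.toFinset.set_encard_biUnion_le _
    _ ≤ hT.toFinset.card • ((D ^ 2 : ℕ) : ℕ∞) :=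
        Finset.sum_le_card_nsmul _ _ _ fun k _ => encard_selected_le hD hR k y
    _ ≤ (K * D ^ 2 : ℕ) := by
        rw [nsmul_eq_mul, Nat.cast_mul, ← hT.encard_eq_coe_toFinset_card]
        gcongr

theorem exists_subcover {K D : ℕ} (hK : HasWBCPWith X K) (hD : IsDoublingWith X D)
    (hA : Bornology.IsBounded A) (hR : 0 < R) (hρ : ∀ x ∈ A, 0 < ρ x ∧ ρ x ≤ R) :
    ∃ C ⊆ A, C.Countable ∧ A ⊆ ⋃ x ∈ C, closedBall x (ρ x) ∧
      ∀ y, {x ∈ C | y ∈ closedBall x (ρ x)}.encard ≤ (K * D ^ 2 : ℕ) :=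
  ⟨⋃ k, selected A ρ R k, iUnion_subset fun k _ hx => (selected_subset k hx).1.1,
    countable_iUnion fun k => (selected_finite hD hA hR k).countable,
    by simpa only [biUnion_iUnion] using subset_iUnion_selected hρ, encard_overlap_le hK hD hR⟩

end Counting

end BesicovitchSelection

section WBCPtoBCP

variable {X : Type*} [MetricSpace X] {K D : ℕ}

theorem HasWBCPWith.exists_subcover (hK : HasWBCPWith X K) (hD : IsDoublingWith X D)
    (hKD : 1 ≤ K * D ^ 2) {A : Set X} (hA : Bornology.IsBounded A) {ρ : X → ℝ}
    (hρ : ∀ x ∈ A, 0 < ρ x) :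
    ∃ C ⊆ A, C.Countable ∧ A ⊆ ⋃ x ∈ C, closedBall x (ρ x) ∧
      ∀ y, {x ∈ C | y ∈ closedBall x (ρ x)}.encard ≤ (K * D ^ 2 : ℕ) := by
  by_cases! hbig : ∃ x ∈ A, A ⊆ closedBall x (ρ x)
  · obtain ⟨x, hx, hAx⟩ := hbig
    refine ⟨{x}, singleton_subset_iff.2 hx, countable_singleton x, by simpa using hAx,
      fun y => ?_⟩
    calc _ ≤ ({x} : Set X).encard := encard_le_encard (sep_subset _ _)
      _ = ((1 : ℕ) : ℕ∞) := by simp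
      _ ≤ (K * D ^ 2 : ℕ) := Nat.cast_le.2 hKD
  rcases A.eq_empty_or_nonempty with rfl | ⟨x₀, hx₀⟩
  · exact ⟨∅, subset_rfl, countable_empty, empty_subset _, by simp⟩
  obtain ⟨R, hR⟩ := isBounded_iff.1 hA
  have hρR : ∀ x ∈ A, 0 < ρ x ∧ ρ x ≤ R := fun x hx => by
    obtain ⟨y, hy, hyx⟩ := not_subset.1 (hbig x hx)
    exact ⟨hρ x hx, (not_le.1 hyx).le.trans (hR hy hx)⟩
  exact BesicovitchSelection.exists_subcover hK hD hA
    ((hρR x₀ hx₀).1.trans_le (hρR x₀ hx₀).2) hρR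

theorem HasWBCPWith.hasBCP (hK : HasWBCPWith X K) (hK1 : 1 ≤ K) (hD : IsDoublingWith X D)
    (hD1 : 1 ≤ D) : HasBCP X := by
  have hKD : 1 ≤ K * D ^ 2 := one_le_mul hK1 (one_le_pow₀ hD1)
  refine ⟨K * D ^ 2, hKD, fun A ℬ hA _ hcov => ?_⟩
  choose! ρ hρ hρℬ using hcov
  obtain ⟨C, hCA, hC, hAC, hCy⟩ := hK.exists_subcover hD hKD hA hρ
  refine ⟨(fun x => (x, ρ x)) '' C, image_subset_iff.2 fun x hx => hρℬ x (hCA hx), hC.image _,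
    by simpa only [biUnion_image] using hAC, fun y => ?_⟩
  have hsub : {p ∈ (fun x => (x, ρ x)) '' C | y ∈ closedBall p.1 p.2} ⊆
      (fun x => (x, ρ x)) '' {x ∈ C | y ∈ closedBall x (ρ x)} := by
    rintro _ ⟨⟨x, hx, rfl⟩, hyx⟩
    exact ⟨x, ⟨hx, hyx⟩, rfl⟩
  exact (encard_le_encard hsub).trans ((encard_image_le _ _).trans (hCy y))

end WBCPtoBCP

/-- In a doubling metric space, BCP and WBCP are equivalent. -/
theorem stmt15 {X : Type*} [MetricSpace X]
    (hdoub : ∃ D : ℕ, 1 ≤ D ∧ ∀ (x : X) (r : ℝ), 0 < r →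
      ∃ s : Finset X, s.card ≤ D ∧ closedBall x (2 * r) ⊆ ⋃ y ∈ s, closedBall y r) :
    HasBCP X ↔ HasWBCP X := by
  obtain ⟨D, hD1, hD⟩ := hdoub
  exact ⟨HasBCP.hasWBCP, fun ⟨K, hK1, hK⟩ => HasWBCPWith.hasBCP hK hK1 hD hD1⟩
end

section
/- Let (X,d_X) and (Y,d_Y) be metric spaces such that d_X satisfies the weak Besicovitch covering property (WBCP) on X and d_Y satisfies WBCP on Y. Then the max distance d_{X×Y}((x,y),(x',y')) := max(d_X(x,x'), d_Y(y,y')) satisfies WBCP on X × Y. -/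
open Metric Set
open scoped ENNReal

/-- Weak Besicovitch covering property for an arbitrary distance function `ρ` on `X`:
there is `K ≥ 1` bounding the cardinality of every family of closed `ρ`-balls
(recorded as pairs (center, radius) with positive radius) such that no ball contains
the center of another one and all balls have a common point. -/
def WBCPFor {X : Type*} (ρ : X → X → ℝ) : Prop :=
  ∃ K : ℕ, 1 ≤ K ∧
    ∀ ℬ : Set (X × ℝ),
      (∀ p ∈ ℬ, 0 < p.2) →
      (∀ p ∈ ℬ, ∀ q ∈ ℬ, p ≠ q → ¬ ρ p.1 q.1 ≤ q.2) →
      (∃ y : X, ∀ p ∈ ℬ, ρ y p.1 ≤ p.2) →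
      ℬ.encard ≤ (K : ℕ∞)

/-- Ramsey-type bound. -/
def ramseyF : ℕ → ℕ → ℕ
  | 0, _ => 0
  | _+1, 0 => 0
  | a+1, b+1 => ramseyF a (b+1) + ramseyF (a+1) b + 1

lemma ramseyF_pos {a b : ℕ} (ha : 1 ≤ a) (hb : 1 ≤ b) : 1 ≤ ramseyF a b := by
  cases a with
  | zero => omega
  | succ a =>
    cases b with
    | zero => omega
    | succ b => simp [ramseyF]

lemma singleton_clique {V : Type*} (R : V → V → Prop) (v : V) :
    ∀ p ∈ ({v} : Finset V), ∀ q ∈ ({v} : Finset V), p ≠ q → R p q := by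
  intro p hp q hq hne
  rw [Finset.mem_singleton] at hp hq
  subst hp; subst hq; exact absurd rfl hne

lemma ramsey_aux {V : Type*} [DecidableEq V] (red : V → V → Prop)
    (hsymm : ∀ p q, red p q → red q p) :
    ∀ a b (s : Finset V),
      (∀ t ⊆ s, (∀ p ∈ t, ∀ q ∈ t, p ≠ q → red p q) → t.card ≤ a) →
      (∀ t ⊆ s, (∀ p ∈ t, ∀ q ∈ t, p ≠ q → ¬ red p q) → t.card ≤ b) →
      s.card ≤ ramseyF a b := by
  classical
  intro a
  induction a with
  | zero =>
    intro b s hred _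
    rcases s.eq_empty_or_nonempty with rfl | ⟨v, hv⟩
    · simp [ramseyF]
    · have h1 := hred {v} (Finset.singleton_subset_iff.2 hv) (singleton_clique red v)
      simp at h1
  | succ a iha =>
    intro b
    induction b with
    | zero =>
      intro s _ hblue
      rcases s.eq_empty_or_nonempty with rfl | ⟨v, hv⟩
      · simp [ramseyF]
      · have h1 := hblue {v} (Finset.singleton_subset_iff.2 hv)
          (singleton_clique (fun p q => ¬ red p q) v)
        simp at h1
    | succ b ihb =>
      intro s hred hblue
      rcases s.eq_empty_or_nonempty with rfl | ⟨v, hv⟩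
      · simp
      · set sR := (s.erase v).filter (fun u => red v u) with hsRdef
        set sB := (s.erase v).filter (fun u => ¬ red v u) with hsBdef
        have hsplit : sR.card + sB.card = (s.erase v).card :=
          Finset.card_filter_add_card_filter_not _
        have hsRs : sR ⊆ s := (Finset.filter_subset _ _).trans (Finset.erase_subset _ _)
        have hsBs : sB ⊆ s := (Finset.filter_subset _ _).trans (Finset.erase_subset _ _)
        have hR : sR.card ≤ ramseyF a (b+1) := by
          apply iha (b+1) sR
          · intro t ht hcl
            have hvnot : v ∉ t := fun hvt =>
              (Finset.mem_erase.1 (Finset.filter_subset _ _ (ht hvt))).1 rfl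
            have hsub : insert v t ⊆ s := by
              intro u hu
              rcases Finset.mem_insert.1 hu with rfl | hu
              · exact hv
              · exact hsRs (ht hu)
            have hcl' : ∀ p ∈ insert v t, ∀ q ∈ insert v t, p ≠ q → red p q := by
              intro p hp q hq hne
              rcases Finset.mem_insert.1 hp with hpv | hp'
              · rcases Finset.mem_insert.1 hq with hqv | hq'
                · exact absurd (hpv.trans hqv.symm) hne
                · subst hpv; exact (Finset.mem_filter.1 (ht hq')).2
              · rcases Finset.mem_insert.1 hq with hqv | hq'
                · subst hqv; exact hsymm _ _ (Finset.mem_filter.1 (ht hp')).2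
                · exact hcl p hp' q hq' hne
            have := hred (insert v t) hsub hcl'
            rw [Finset.card_insert_of_notMem hvnot] at this
            omega
          · intro t ht hcl
            exact hblue t (ht.trans hsRs) hcl
        have hB : sB.card ≤ ramseyF (a+1) b := by
          apply ihb sB
          · intro t ht hcl
            exact hred t (ht.trans hsBs) hcl
          · intro t ht hcl
            have hvnot : v ∉ t := fun hvt =>
              (Finset.mem_erase.1 (Finset.filter_subset _ _ (ht hvt))).1 rfl
            have hsub : insert v t ⊆ s := by
              intro u hu
              rcases Finset.mem_insert.1 hu with rfl | hu
              · exact hv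
              · exact hsBs (ht hu)
            have hcl' : ∀ p ∈ insert v t, ∀ q ∈ insert v t, p ≠ q → ¬ red p q := by
              intro p hp q hq hne
              rcases Finset.mem_insert.1 hp with hpv | hp'
              · rcases Finset.mem_insert.1 hq with hqv | hq'
                · exact absurd (hpv.trans hqv.symm) hne
                · subst hpv; exact (Finset.mem_filter.1 (ht hq')).2
              · rcases Finset.mem_insert.1 hq with hqv | hq'
                · subst hqv; exact fun h => (Finset.mem_filter.1 (ht hp')).2 (hsymm _ _ h)
                · exact hcl p hp' q hq' hne
            have := hblue (insert v t) hsub hcl'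
            rw [Finset.card_insert_of_notMem hvnot] at this
            omega
        have hcount : s.card = sR.card + sB.card + 1 := by
          have h1 : (s.erase v).card = s.card - 1 := Finset.card_erase_of_mem hv
          have h2 : 1 ≤ s.card := Finset.card_pos.2 ⟨v, hv⟩
          omega
        have he : ramseyF (a+1) (b+1) = ramseyF a (b+1) + ramseyF (a+1) b + 1 := by
          simp [ramseyF]
        omega

/-- If `d_X` and `d_Y` satisfy WBCP, then so does the max distance on `X × Y`. -/
theorem stmt18 {X Y : Type*} [MetricSpace X] [MetricSpace Y]
    (hX : WBCPFor (fun x x' : X => dist x x'))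
    (hY : WBCPFor (fun y y' : Y => dist y y')) :
    WBCPFor (fun p q : X × Y => max (dist p.1 q.1) (dist p.2 q.2)) := by
  classical
  obtain ⟨KX, hKX1, hXp⟩ := hX
  obtain ⟨KY, hKY1, hYp⟩ := hY
  refine ⟨ramseyF KX KY, ramseyF_pos hKX1 hKY1, ?_⟩
  rintro ℬ hpos hsep ⟨z, hz⟩
  set red : ((X × Y) × ℝ) → ((X × Y) × ℝ) → Prop :=
    fun p q => max p.2 q.2 < dist p.1.1 q.1.1 with hred_def
  have hsymm : ∀ p q, red p q → red q p := by
    intro p q h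
    simp only [hred_def] at h ⊢
    rw [max_comm, dist_comm]
    exact h
  -- separation in the product gives separation above the max radius
  have hsep' : ∀ p ∈ ℬ, ∀ q ∈ ℬ, p ≠ q →
      max p.2 q.2 < max (dist p.1.1 q.1.1) (dist p.1.2 q.1.2) := by
    intro p hp q hq hne
    have h1 : q.2 < max (dist p.1.1 q.1.1) (dist p.1.2 q.1.2) :=
      not_le.1 (hsep p hp q hq hne)
    have h2 : p.2 < max (dist q.1.1 p.1.1) (dist q.1.2 p.1.2) :=
      not_le.1 (hsep q hq p hp (Ne.symm hne))
    rw [dist_comm, dist_comm q.1.2] at h2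
    exact max_lt h2 h1
  have key : ∀ s : Finset ((X × Y) × ℝ), ↑s ⊆ ℬ → s.card ≤ ramseyF KX KY := by
    intro s hsℬ
    apply ramsey_aux red hsymm KX KY s
    · -- red cliques are bounded by KX
      intro t ht hcl
      have htℬ : (↑t : Set ((X × Y) × ℝ)) ⊆ ℬ := fun p hp => hsℬ (ht hp)
      set f : ((X × Y) × ℝ) → X × ℝ := fun p => (p.1.1, p.2) with hfdef
      have hinj : Set.InjOn f ↑t := by
        intro p hp q hq heq
        by_contra hne
        have h := hcl p hp q hq hne
        simp only [hfdef] at heq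
        have hx : p.1.1 = q.1.1 := (Prod.ext_iff.1 heq).1
        have hpos' := hpos p (htℬ hp)
        simp only [hred_def] at h
        rw [hx, dist_self] at h
        have : (0:ℝ) < p.2 := hpos'
        have hle := le_max_left p.2 q.2
        linarith
      have hC := hXp (f '' ↑t) ?_ ?_ ?_
      · have hcardeq : (f '' ↑t).encard = (t.card : ℕ∞) := by
          rw [Set.InjOn.encard_image hinj, Set.encard_coe_eq_coe_finsetCard]
        rw [hcardeq] at hC
        exact_mod_cast hC
      · rintro P ⟨p, hp, rfl⟩
        exact hpos p (htℬ hp)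
      · rintro P ⟨p, hp, rfl⟩ Q ⟨q, hq, rfl⟩ hne hle
        have hpq : p ≠ q := fun h => hne (by rw [h])
        have h := hcl p hp q hq hpq
        simp only [hred_def] at h
        exact absurd (hle.trans (le_max_right p.2 q.2)) (not_le.2 h)
      · refine ⟨z.1, ?_⟩
        rintro P ⟨p, hp, rfl⟩
        exact (le_max_left _ _).trans (hz p (htℬ hp))
    · -- blue cliques are bounded by KY
      intro t ht hcl
      have htℬ : (↑t : Set ((X × Y) × ℝ)) ⊆ ℬ := fun p hp => hsℬ (ht hp)
      -- for a blue pair, the Y-distance exceeds the max radius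
      have hYsep : ∀ p ∈ t, ∀ q ∈ t, p ≠ q → max p.2 q.2 < dist p.1.2 q.1.2 := by
        intro p hp q hq hne
        have h := hcl p hp q hq hne
        simp only [hred_def, not_lt] at h
        have h2 := hsep' p (htℬ hp) q (htℬ hq) hne
        rcases lt_max_iff.1 h2 with h3 | h3
        · exact absurd h3 (not_lt.2 h)
        · exact h3
      set g : ((X × Y) × ℝ) → Y × ℝ := fun p => (p.1.2, p.2) with hgdef
      have hinj : Set.InjOn g ↑t := by
        intro p hp q hq heq
        by_contra hne
        have h := hYsep p hp q hq hne
        simp only [hgdef] at heq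
        have hy : p.1.2 = q.1.2 := (Prod.ext_iff.1 heq).1
        have hpos' := hpos p (htℬ hp)
        rw [hy, dist_self] at h
        have hle := le_max_left p.2 q.2
        linarith
      have hC := hYp (g '' ↑t) ?_ ?_ ?_
      · have hcardeq : (g '' ↑t).encard = (t.card : ℕ∞) := by
          rw [Set.InjOn.encard_image hinj, Set.encard_coe_eq_coe_finsetCard]
        rw [hcardeq] at hC
        exact_mod_cast hC
      · rintro P ⟨p, hp, rfl⟩
        exact hpos p (htℬ hp)
      · rintro P ⟨p, hp, rfl⟩ Q ⟨q, hq, rfl⟩ hne hle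
        have hpq : p ≠ q := fun h => hne (by rw [h])
        have h := hYsep p hp q hq hpq
        exact absurd (hle.trans (le_max_right p.2 q.2)) (not_le.2 h)
      · refine ⟨z.2, ?_⟩
        rintro P ⟨p, hp, rfl⟩
        exact (le_max_right _ _).trans (hz p (htℬ hp))
  -- conclude for the whole (possibly infinite) family
  by_contra hcon
  push_neg at hcon
  have h1 : ((ramseyF KX KY + 1 : ℕ) : ℕ∞) ≤ ℬ.encard := by
    push_cast
    exact Order.add_one_le_of_lt hcon
  obtain ⟨t, htℬ, htc⟩ := Set.exists_subset_encard_eq h1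
  have htfin : t.Finite := Set.finite_of_encard_eq_coe htc
  have hcard : htfin.toFinset.card = ramseyF KX KY + 1 := by
    have := htfin.encard_eq_coe_toFinset_card
    rw [this] at htc
    exact_mod_cast htc
  have := key htfin.toFinset (by rwa [htfin.coe_toFinset])
  omega
end
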